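/- arXiv:2305.04164 — 4 statements merged into one kernel-verified Lean document; each statement's English description precedes it below -/
import Mathlib

section
/- In B_{m,n}(q,t), for every k with 1 ≤ k ≤ min{m,n} − 1, one has e_k H_{-k} H_k⁻¹ e_k = e_k H_{-k}⁻¹ H_k e_k. -/
open scoped Classical

noncomputable section

/-- The field `ℚ(q,t)` of rational functions in two indeterminates over `ℚ`. -/
abbrev KK : Type := FractionRing (MvPolynomial (Fin 2) ℚ)

/-- The indeterminate `q` viewed inside `ℚ(q,t)`. -/
def qv : KK := algebraMap (MvPolynomial (Fin 2) ℚ) KK (MvPolynomial.X 0)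

/-- The indeterminate `t` viewed inside `ℚ(q,t)`. -/
def tv : KK := algebraMap (MvPolynomial (Fin 2) ℚ) KK (MvPolynomial.X 1)

/-- The valid indices `i` for the generators `H i` of `B_{m,n}(q,t)`:
`1 ≤ i ≤ n - 1` or `1 ≤ -i ≤ m - 1`. -/
def validIdx (m n : ℕ) (i : ℤ) : Prop :=
  (1 ≤ i ∧ i ≤ (n : ℤ) - 1) ∨ (1 ≤ -i ∧ -i ≤ (m : ℤ) - 1)

/-- Generators of the quantized walled Brauer algebra `B_{m,n}(q,t)`. -/
inductive WBgen (m n : ℕ) : Type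
  | H (i : ℤ) (h : validIdx m n i) : WBgen m n
  | E : WBgen m n

/-- The generator `H i` in the free algebra. -/
def fH (m n : ℕ) (i : ℤ) (h : validIdx m n i) : FreeAlgebra KK (WBgen m n) :=
  FreeAlgebra.ι KK (WBgen.H i h)

/-- The generator `e` in the free algebra. -/
def fE (m n : ℕ) : FreeAlgebra KK (WBgen m n) := FreeAlgebra.ι KK WBgen.E

/-- The element `H i - (q - q⁻¹)`, which becomes the inverse of `H i` in the quotient. -/
def fHinv (m n : ℕ) (i : ℤ) (h : validIdx m n i) : FreeAlgebra KK (WBgen m n) :=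
  fH m n i h - algebraMap KK _ (qv - qv⁻¹)

/-- The defining relations of the quantized walled Brauer algebra `B_{m,n}(q,t)`. -/
inductive WBrel (m n : ℕ) :
    FreeAlgebra KK (WBgen m n) → FreeAlgebra KK (WBgen m n) → Prop
  | quad (i : ℤ) (h : validIdx m n i) :
      WBrel m n ((fH m n i h - algebraMap KK _ qv) * (fH m n i h + algebraMap KK _ qv⁻¹)) 0
  | comm (i : ℤ) (hi : validIdx m n i) (j : ℤ) (hj : validIdx m n j) (hij : 1 < |i - j|) :
      WBrel m n (fH m n i hi * fH m n j hj) (fH m n j hj * fH m n i hi)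
  | braid (i : ℤ) (hi : validIdx m n i) (hi1 : validIdx m n (i + 1)) :
      WBrel m n (fH m n i hi * fH m n (i + 1) hi1 * fH m n i hi)
        (fH m n (i + 1) hi1 * fH m n i hi * fH m n (i + 1) hi1)
  | commE (i : ℤ) (hi : validIdx m n i) (h2 : 2 ≤ |i|) :
      WBrel m n (fH m n i hi * fE m n) (fE m n * fH m n i hi)
  | eHe (i : ℤ) (hi : validIdx m n i) (h : i = 1 ∨ i = -1) :
      WBrel m n (fE m n * fH m n i hi * fE m n) (algebraMap KK _ tv * fE m n)
  | esq : WBrel m n (fE m n * fE m n)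
      (algebraMap KK _ ((tv - tv⁻¹) / (qv - qv⁻¹)) * fE m n)
  | rel7 (h1 : validIdx m n 1) (hm : validIdx m n (-1)) :
      WBrel m n (fE m n * fHinv m n (-1) hm * fH m n 1 h1 * fE m n * fH m n (-1) hm)
        (fE m n * fHinv m n (-1) hm * fH m n 1 h1 * fE m n * fH m n 1 h1)
  | rel8 (h1 : validIdx m n 1) (hm : validIdx m n (-1)) :
      WBrel m n (fH m n (-1) hm * fE m n * fHinv m n (-1) hm * fH m n 1 h1 * fE m n)
        (fH m n 1 h1 * fE m n * fHinv m n (-1) hm * fH m n 1 h1 * fE m n)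

/-- The quantized walled Brauer algebra `B_{m,n}(q,t)`. -/
abbrev WB (m n : ℕ) : Type := RingQuot (WBrel m n)

/-- The generator `H i` of `B_{m,n}(q,t)`. -/
def HB (m n : ℕ) (i : ℤ) (h : validIdx m n i) : WB m n :=
  RingQuot.mkAlgHom KK (WBrel m n) (fH m n i h)

/-- The generator `e` of `B_{m,n}(q,t)`. -/
def EB (m n : ℕ) : WB m n := RingQuot.mkAlgHom KK (WBrel m n) (fE m n)

/-- The inverse `H i⁻¹ = H i - (q - q⁻¹)` of the generator `H i`. -/
def HBinv (m n : ℕ) (i : ℤ) (h : validIdx m n i) : WB m n :=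
  HB m n i h - algebraMap KK _ (qv - qv⁻¹)

/-- Total version of `H i` (equal to `H i` for valid `i`, junk value `1` otherwise). -/
def Htil (m n : ℕ) (i : ℤ) : WB m n :=
  if h : validIdx m n i then HB m n i h else 1

/-- Total version of `H i⁻¹` (equal to `H i⁻¹` for valid `i`, junk value `1` otherwise). -/
def Htilinv (m n : ℕ) (i : ℤ) : WB m n :=
  if h : validIdx m n i then HBinv m n i h else 1

/-- The elements `e_k`:  `e_0 = 1`, `e_1 = e`, and
`e_{k+1} = e ⬝ H_{-1}⁻¹ H_{-2}⁻¹ ⋯ H_{-k}⁻¹ ⬝ H_1 H_2 ⋯ H_k ⬝ e_k`. -/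
def ek (m n : ℕ) : ℕ → WB m n
  | 0 => 1
  | k + 1 =>
      EB m n *
        (((List.range k).map (fun j => Htilinv m n (-((j + 1 : ℕ) : ℤ)))).prod) *
        (((List.range k).map (fun j => Htil m n ((j + 1 : ℕ) : ℤ))).prod) *
        ek m n k

namespace WBaux

variable {m n : ℕ}

/-- scalar embedding -/
abbrev sc (m n : ℕ) (x : KK) : WB m n := algebraMap KK (WB m n) x

lemma sc_comm (x : KK) (a : WB m n) : a * sc m n x = sc m n x * a :=
  (Algebra.commutes x a).symm

lemma qv_ne_zero : qv ≠ 0 := by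
  intro h
  exact MvPolynomial.X_ne_zero 0 ((IsFractionRing.to_map_eq_zero_iff).mp h)

lemma qv_mul_inv : qv * qv⁻¹ = 1 := mul_inv_cancel₀ qv_ne_zero

lemma validP (j : ℤ) (h1 : 1 ≤ j) (h2 : j ≤ (n:ℤ) - 1) : validIdx m n j :=
  Or.inl ⟨h1, h2⟩

lemma validN (j : ℤ) (h1 : 1 ≤ j) (h2 : j ≤ (m:ℤ) - 1) : validIdx m n (-j) :=
  Or.inr ⟨by omega, by omega⟩

lemma HB_eq (i : ℤ) (h : validIdx m n i) :
    (RingQuot.mkAlgHom KK (WBrel m n)) (fH m n i h) = HB m n i h := rfl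

lemma EB_eq : (RingQuot.mkAlgHom KK (WBrel m n)) (fE m n) = EB m n := rfl

lemma Htil_eq (i : ℤ) (h : validIdx m n i) : Htil m n i = HB m n i h := dif_pos h

lemma Htilinv_eq (i : ℤ) (h : validIdx m n i) : Htilinv m n i = HBinv m n i h := dif_pos h

lemma Htilinv_eq' (i : ℤ) (h : validIdx m n i) :
    Htilinv m n i = Htil m n i - sc m n (qv - qv⁻¹) := by
  rw [Htilinv_eq i h, Htil_eq i h]; rfl

lemma fHinv_eq (i : ℤ) (h : validIdx m n i) :
    (RingQuot.mkAlgHom KK (WBrel m n)) (fHinv m n i h) = Htilinv m n i := by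
  rw [Htilinv_eq i h]
  show (RingQuot.mkAlgHom KK (WBrel m n)) (fH m n i h - algebraMap KK _ (qv - qv⁻¹)) = _
  rw [map_sub, AlgHom.commutes, HB_eq]; rfl

/-- generic quadratic-relation consequence -/
lemma quad_aux {R : Type*} [Ring R] (a u v : R) (huv : u * v = 1) (hu : u * a = a * u)
    (key : (a - u) * (a + v) = 0) : a * (a - u + v) = 1 := by
  have h2 : (a - u) * (a + v) = a * a + a * v - a * u - 1 := by
    rw [sub_mul, mul_add, mul_add, hu, huv]; abel
  have h3 : a * (a - u + v) = a * a + a * v - a * u := by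
    rw [mul_add, mul_sub]; abel
  have h4 : a * a + a * v - a * u = 1 := sub_eq_zero.mp (h2.symm.trans key)
  rw [h3, h4]

lemma quad_aux' {R : Type*} [Ring R] (a u v : R) (huv : u * v = 1) (hu : u * a = a * u)
    (hv : v * a = a * v) (key : (a - u) * (a + v) = 0) : (a - u + v) * a = 1 := by
  have h2 : (a - u + v) * a = a * (a - u + v) := by
    rw [add_mul, sub_mul, mul_add, mul_sub, hu, hv]
  rw [h2]; exact quad_aux a u v huv hu key

lemma Htil_mul_Htilinv (i : ℤ) : Htil m n i * Htilinv m n i = 1 := by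
  by_cases h : validIdx m n i
  · rw [Htil_eq i h, Htilinv_eq i h]
    have key := RingQuot.mkAlgHom_rel KK (WBrel.quad (m := m) (n := n) i h)
    rw [map_mul, map_sub, map_add, map_zero, AlgHom.commutes, AlgHom.commutes, HB_eq] at key
    have := quad_aux (HB m n i h) (sc m n qv) (sc m n qv⁻¹)
      (by rw [← map_mul, qv_mul_inv, map_one]) (Algebra.commutes qv _) key
    show HB m n i h * HBinv m n i h = 1
    rw [HBinv]
    calc HB m n i h * (HB m n i h - algebraMap KK _ (qv - qv⁻¹))
        = HB m n i h * (HB m n i h - sc m n qv + sc m n qv⁻¹) := by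
          rw [map_sub]; congr 1; abel
      _ = 1 := this
  · rw [Htil, dif_neg h, Htilinv, dif_neg h, one_mul]

lemma Htilinv_mul_Htil (i : ℤ) : Htilinv m n i * Htil m n i = 1 := by
  by_cases h : validIdx m n i
  · rw [Htil_eq i h, Htilinv_eq i h]
    have key := RingQuot.mkAlgHom_rel KK (WBrel.quad (m := m) (n := n) i h)
    rw [map_mul, map_sub, map_add, map_zero, AlgHom.commutes, AlgHom.commutes, HB_eq] at key
    have := quad_aux' (HB m n i h) (sc m n qv) (sc m n qv⁻¹)
      (by rw [← map_mul, qv_mul_inv, map_one]) (Algebra.commutes qv _) (Algebra.commutes _ _) key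
    show HBinv m n i h * HB m n i h = 1
    rw [HBinv]
    calc (HB m n i h - algebraMap KK _ (qv - qv⁻¹)) * HB m n i h
        = (HB m n i h - sc m n qv + sc m n qv⁻¹) * HB m n i h := by
          rw [map_sub]; congr 1; abel
      _ = 1 := this
  · rw [Htil, dif_neg h, Htilinv, dif_neg h, one_mul]

end WBaux
namespace WBaux

variable {m n : ℕ}

lemma comm_trans {Mo : Type*} [Monoid Mo] {a b x : Mo} (h1 : a * b = 1) (h2 : b * a = 1)
    (h : Commute a x) : Commute b x := by
  show b * x = x * b
  calc b * x = b * x * (a * b) := by rw [h1, mul_one]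
    _ = b * (x * a) * b := by rw [← mul_assoc, ← mul_assoc]
    _ = b * (a * x) * b := by rw [h.eq]
    _ = (b * a) * x * b := by rw [← mul_assoc]
    _ = x * b := by rw [h2, one_mul]

lemma mulc {Mo : Type*} [Semigroup Mo] {a b : Mo} (h : Commute a b) (c : Mo) :
    a * (b * c) = b * (a * c) := by rw [← mul_assoc, h.eq, mul_assoc]

lemma two_le_abs (x : ℤ) (h : 2 ≤ x ∨ x ≤ -2) : 2 ≤ |x| := by
  have h1 := abs_choice x; have h2 := abs_nonneg x; omega

lemma one_lt_abs_sub (i j : ℤ) (h : i + 2 ≤ j ∨ j + 2 ≤ i) : 1 < |i - j| := by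
  have h1 := abs_choice (i - j); have h2 := abs_nonneg (i - j); omega

lemma commH (i j : ℤ) (hij : 1 < |i - j|) : Commute (Htil m n i) (Htil m n j) := by
  by_cases hi : validIdx m n i
  · by_cases hj : validIdx m n j
    · have key := RingQuot.mkAlgHom_rel KK (WBrel.comm (m := m) (n := n) i hi j hj hij)
      rw [map_mul, map_mul, HB_eq, HB_eq] at key
      rw [Htil_eq i hi, Htil_eq j hj]
      exact key
    · simp only [Htil, dif_neg hj]; exact Commute.one_right _
  · simp only [Htil, dif_neg hi]; exact Commute.one_left _

lemma commH_ir (i j : ℤ) (hij : 1 < |i - j|) : Commute (Htilinv m n i) (Htil m n j) :=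
  comm_trans (Htil_mul_Htilinv i) (Htilinv_mul_Htil i) (commH i j hij)

lemma commH_il (i j : ℤ) (hij : 1 < |i - j|) : Commute (Htil m n i) (Htilinv m n j) :=
  (comm_trans (Htil_mul_Htilinv j) (Htilinv_mul_Htil j) (commH i j hij).symm).symm

lemma commH_ii (i j : ℤ) (hij : 1 < |i - j|) : Commute (Htilinv m n i) (Htilinv m n j) :=
  (comm_trans (Htil_mul_Htilinv j) (Htilinv_mul_Htil j) (commH_ir i j hij).symm).symm

lemma commE (i : ℤ) (h2 : 2 ≤ |i|) : Commute (EB m n) (Htil m n i) := by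
  by_cases hi : validIdx m n i
  · have key := RingQuot.mkAlgHom_rel KK (WBrel.commE (m := m) (n := n) i hi h2)
    rw [map_mul, map_mul, HB_eq, EB_eq] at key
    rw [Htil_eq i hi]
    exact key.symm
  · simp only [Htil, dif_neg hi]; exact Commute.one_right _

lemma commE' (i : ℤ) (h2 : 2 ≤ |i|) : Commute (EB m n) (Htilinv m n i) :=
  (comm_trans (Htil_mul_Htilinv i) (Htilinv_mul_Htil i) (commE i h2).symm).symm

def dD : KK := (tv - tv⁻¹) / (qv - qv⁻¹)

lemma esq : EB m n * EB m n = sc m n dD * EB m n := by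
  have key := RingQuot.mkAlgHom_rel KK (WBrel.esq (m := m) (n := n))
  rw [map_mul, map_mul, AlgHom.commutes, EB_eq] at key
  exact key

lemma eHe (i : ℤ) (hi : validIdx m n i) (h : i = 1 ∨ i = -1) :
    EB m n * Htil m n i * EB m n = sc m n tv * EB m n := by
  have key := RingQuot.mkAlgHom_rel KK (WBrel.eHe (m := m) (n := n) i hi h)
  rw [map_mul, map_mul, map_mul, AlgHom.commutes, HB_eq, EB_eq] at key
  rw [Htil_eq i hi]
  exact key

lemma braidH (i j : ℤ) (hj : j = i + 1) (hi : validIdx m n i) (hij : validIdx m n j) :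
    Htil m n i * Htil m n j * Htil m n i = Htil m n j * Htil m n i * Htil m n j := by
  subst hj
  have key := RingQuot.mkAlgHom_rel KK (WBrel.braid (m := m) (n := n) i hi hij)
  simp only [map_mul, HB_eq] at key
  rw [Htil_eq i hi, Htil_eq (i+1) hij]
  exact key

variable (i j : ℤ)

/-- `x⁻¹ y x = y x y⁻¹` -/
lemma braid_c1 (hj : j = i + 1) (hi : validIdx m n i) (hij : validIdx m n j) :
    Htilinv m n i * Htil m n j * Htil m n i
    = Htil m n j * Htil m n i * Htilinv m n j := by
  calc Htilinv m n i * Htil m n j * Htil m n i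
      = Htilinv m n i * (Htil m n j * Htil m n i * Htil m n j) * Htilinv m n j := by
        simp only [mul_assoc]; rw [Htil_mul_Htilinv j, mul_one]
    _ = Htilinv m n i * (Htil m n i * Htil m n j * Htil m n i) * Htilinv m n j := by
        rw [← braidH i j hj hi hij]
    _ = Htil m n j * Htil m n i * Htilinv m n j := by
        simp only [← mul_assoc]; rw [Htilinv_mul_Htil i, one_mul]

/-- `y⁻¹ x y = x y x⁻¹` -/
lemma braid_d1 (hj : j = i + 1) (hi : validIdx m n i) (hij : validIdx m n j) :
    Htilinv m n j * Htil m n i * Htil m n j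
    = Htil m n i * Htil m n j * Htilinv m n i := by
  calc Htilinv m n j * Htil m n i * Htil m n j
      = Htilinv m n j * (Htil m n i * Htil m n j * Htil m n i) * Htilinv m n i := by
        simp only [mul_assoc]; rw [Htil_mul_Htilinv i, mul_one]
    _ = Htilinv m n j * (Htil m n j * Htil m n i * Htil m n j) * Htilinv m n i := by
        rw [braidH i j hj hi hij]
    _ = Htil m n i * Htil m n j * Htilinv m n i := by
        simp only [← mul_assoc]; rw [Htilinv_mul_Htil j, one_mul]

/-- `x y⁻¹ = y⁻¹ x⁻¹ y x` -/
lemma braid_c2 (hj : j = i + 1) (hi : validIdx m n i) (hij : validIdx m n j) :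
    Htil m n i * Htilinv m n j
    = Htilinv m n j * Htilinv m n i * Htil m n j * Htil m n i := by
  calc Htil m n i * Htilinv m n j
      = Htilinv m n j * (Htil m n j * Htil m n i * Htilinv m n j) := by
        simp only [← mul_assoc]; rw [Htilinv_mul_Htil j, one_mul]
    _ = Htilinv m n j * (Htilinv m n i * Htil m n j * Htil m n i) := by
        rw [braid_c1 i j hj hi hij]
    _ = Htilinv m n j * Htilinv m n i * Htil m n j * Htil m n i := by
        simp only [← mul_assoc]

/-- `x⁻¹ y⁻¹ x = y x⁻¹ y⁻¹` -/
lemma braid_c3 (hj : j = i + 1) (hi : validIdx m n i) (hij : validIdx m n j) :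
    Htilinv m n i * Htilinv m n j * Htil m n i
    = Htil m n j * Htilinv m n i * Htilinv m n j := by
  calc Htilinv m n i * Htilinv m n j * Htil m n i
      = Htilinv m n i * (Htilinv m n j * Htil m n i * Htil m n j) * Htilinv m n j := by
        simp only [mul_assoc]; rw [Htil_mul_Htilinv j, mul_one]
    _ = Htilinv m n i * (Htil m n i * Htil m n j * Htilinv m n i) * Htilinv m n j := by
        rw [braid_d1 i j hj hi hij]
    _ = Htil m n j * Htilinv m n i * Htilinv m n j := by
        simp only [← mul_assoc]; rw [Htilinv_mul_Htil i, one_mul]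

end WBaux
namespace WBaux

variable {m n : ℕ}

def posFrom (m n : ℕ) (s : ℤ) : ℕ → WB m n
  | 0 => 1
  | r+1 => posFrom m n s r * Htil m n (s + r)

def negFrom (m n : ℕ) (s : ℤ) : ℕ → WB m n
  | 0 => 1
  | r+1 => negFrom m n s r * Htilinv m n (-(s + r))

def pIR (m n : ℕ) : ℕ → WB m n
  | 0 => 1
  | r+1 => Htilinv m n ((r : ℤ) + 1) * pIR m n r

lemma posB_list (k : ℕ) :
    ((List.range k).map (fun j => Htil m n ((j + 1 : ℕ) : ℤ))).prod = posFrom m n 1 k := by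
  induction k with
  | zero => simp [posFrom]
  | succ k ih =>
      rw [List.range_succ, List.map_append, List.prod_append]
      simp only [List.map_cons, List.map_nil, List.prod_cons, List.prod_nil, mul_one]
      rw [ih, posFrom]
      congr 2
      push_cast; ring

lemma negA_list (k : ℕ) :
    ((List.range k).map (fun j => Htilinv m n (-((j + 1 : ℕ) : ℤ)))).prod
      = negFrom m n 1 k := by
  induction k with
  | zero => simp [negFrom]
  | succ k ih =>
      rw [List.range_succ, List.map_append, List.prod_append]
      simp only [List.map_cons, List.map_nil, List.prod_cons, List.prod_nil, mul_one]
      rw [ih, negFrom]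
      congr 2
      push_cast; ring

lemma ek_succ (k : ℕ) :
    ek m n (k + 1) = EB m n * negFrom m n 1 k * posFrom m n 1 k * ek m n k := by
  rw [ek, posB_list, negA_list]

lemma ek_one : ek m n 1 = EB m n := by
  rw [ek_succ]
  simp [posFrom, negFrom, ek]

lemma ek_two : ek m n 2 = EB m n * Htilinv m n (-1) * Htil m n 1 * EB m n := by
  rw [ek_succ, ek_one]
  norm_num [posFrom, negFrom]

/-- commuting with posFrom -/
lemma comm_posFrom (x : WB m n) (s : ℤ) (r : ℕ)
    (h : ∀ j : ℤ, s ≤ j → j < s + r → Commute x (Htil m n j)) :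
    Commute x (posFrom m n s r) := by
  induction r with
  | zero => exact Commute.one_right x
  | succ r ih =>
      rw [posFrom]
      exact Commute.mul_right (ih (fun j h1 h2 => h j h1 (by omega)))
        (h (s + r) (by omega) (by omega))

lemma comm_negFrom (x : WB m n) (s : ℤ) (r : ℕ)
    (h : ∀ j : ℤ, s ≤ j → j < s + r → Commute x (Htilinv m n (-j))) :
    Commute x (negFrom m n s r) := by
  induction r with
  | zero => exact Commute.one_right x
  | succ r ih =>
      rw [negFrom]
      exact Commute.mul_right (ih (fun j h1 h2 => h j h1 (by omega)))
        (h (s + r) (by omega) (by omega))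

lemma comm_pIR (x : WB m n) (r : ℕ)
    (h : ∀ j : ℤ, 1 ≤ j → j ≤ r → Commute x (Htilinv m n j)) :
    Commute x (pIR m n r) := by
  induction r with
  | zero => exact Commute.one_right x
  | succ r ih =>
      rw [pIR]
      exact Commute.mul_right (h ((r : ℤ) + 1) (by omega) (by omega))
        (ih (fun j h1 h2 => h j h1 (by omega)))

/-- `Htil i` commutes with `ek k` whenever `|i| ≥ k+1` and `|i| ≥ 2`. -/
lemma comm_ek (i : ℤ) (k : ℕ) (h2 : 2 ≤ |i|) (hk : (k : ℤ) + 1 ≤ |i|) :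
    Commute (Htil m n i) (ek m n k) := by
  induction k with
  | zero => rw [ek]; exact Commute.one_right _
  | succ k ih =>
      rw [ek_succ]
      have habs := abs_choice i
      refine Commute.mul_right (Commute.mul_right (Commute.mul_right
        ((commE i h2).symm) ?_) ?_) (ih (by omega))
      · exact comm_negFrom _ 1 k (fun j hj1 hj2 =>
          commH_il i (-j) (one_lt_abs_sub i (-j) (by omega)))
      · exact comm_posFrom _ 1 k (fun j hj1 hj2 =>
          commH i j (one_lt_abs_sub i j (by omega)))

lemma comm_ek' (i : ℤ) (k : ℕ) (h2 : 2 ≤ |i|) (hk : (k : ℤ) + 1 ≤ |i|) :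
    Commute (Htilinv m n i) (ek m n k) :=
  comm_trans (Htil_mul_Htilinv i) (Htilinv_mul_Htil i) (comm_ek i k h2 hk)

/-- `E * ek k = δ • ek k` for `k ≥ 1`. -/
lemma E_ek (k : ℕ) (hk : 1 ≤ k) : EB m n * ek m n k = sc m n dD * ek m n k := by
  obtain ⟨j, rfl⟩ : ∃ j, k = j + 1 := ⟨k - 1, by omega⟩
  rw [ek_succ]
  simp only [← mul_assoc]
  rw [esq]
  try simp only [mul_assoc]

lemma sc_lc (x : KK) (a b : WB m n) : a * (sc m n x * b) = sc m n x * (a * b) := by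
  rw [← mul_assoc, sc_comm, mul_assoc]

lemma ek_E (k : ℕ) (hk : 1 ≤ k) : ek m n k * EB m n = sc m n dD * ek m n k := by
  induction k with
  | zero => omega
  | succ k ih =>
      rcases Nat.eq_zero_or_pos k with rfl | hk'
      · rw [ek_one, esq]
      · calc ek m n (k+1) * EB m n
            = EB m n * (negFrom m n 1 k * (posFrom m n 1 k * (ek m n k * EB m n))) := by
              rw [ek_succ]; simp only [mul_assoc]
          _ = sc m n dD * (EB m n * (negFrom m n 1 k * (posFrom m n 1 k * ek m n k))) := by
              rw [ih hk']; simp only [sc_lc]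
          _ = sc m n dD * ek m n (k+1) := by rw [ek_succ]; simp only [mul_assoc]

end WBaux
namespace WBaux

variable {m n : ℕ}

lemma Htil_invalid (i : ℤ) (h : ¬ validIdx m n i) : Htil m n i = 1 := dif_neg h

lemma Htilinv_invalid (i : ℤ) (h : ¬ validIdx m n i) : Htilinv m n i = 1 := dif_neg h

lemma not_valid_zero : ¬ validIdx m n 0 := by
  rintro (⟨h1, -⟩ | ⟨h1, -⟩) <;> omega

lemma posFrom_cons (s : ℤ) (r : ℕ) :
    posFrom m n s (r + 1) = Htil m n s * posFrom m n (s + 1) r := by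
  induction r with
  | zero => simp [posFrom]
  | succ r ih =>
      rw [posFrom, ih, posFrom, mul_assoc]
      congr 2
      push_cast; ring

lemma negFrom_cons (s : ℤ) (r : ℕ) :
    negFrom m n s (r + 1) = Htilinv m n (-s) * negFrom m n (s + 1) r := by
  induction r with
  | zero => simp [negFrom]
  | succ r ih =>
      rw [negFrom, ih, negFrom, mul_assoc]
      congr 3
      push_cast; ring

/-- Commutes needed often -/
lemma commE_posFrom (r : ℕ) : Commute (EB m n) (posFrom m n 2 r) :=
  comm_posFrom _ 2 r (fun j h1 _ => commE j (two_le_abs j (Or.inl h1)))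

lemma commE_negFrom (r : ℕ) : Commute (EB m n) (negFrom m n 2 r) :=
  comm_negFrom _ 2 r (fun j h1 _ => commE' (-j) (two_le_abs (-j) (Or.inr (by omega))))

lemma commH1_negFrom2 (r : ℕ) : Commute (Htil m n 1) (negFrom m n 2 r) :=
  comm_negFrom _ 2 r (fun j h1 _ => commH_il 1 (-j) (one_lt_abs_sub 1 (-j) (by omega)))

lemma commHpos_negFrom (i : ℤ) (hi : 1 ≤ i) (s : ℤ) (hs : 1 ≤ s) (r : ℕ) :
    Commute (Htil m n i) (negFrom m n s r) :=
  comm_negFrom _ s r (fun j h1 _ => commH_il i (-j) (one_lt_abs_sub i (-j) (by omega)))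

lemma commHposinv_negFrom (i : ℤ) (hi : 1 ≤ i) (s : ℤ) (hs : 1 ≤ s) (r : ℕ) :
    Commute (Htilinv m n i) (negFrom m n s r) :=
  comm_negFrom _ s r (fun j h1 _ => commH_ii i (-j) (one_lt_abs_sub i (-j) (by omega)))

lemma commHneg_posFrom (i : ℤ) (hi : i ≤ -1) (s : ℤ) (hs : 1 ≤ s) (r : ℕ) :
    Commute (Htil m n i) (posFrom m n s r) :=
  comm_posFrom _ s r (fun j h1 _ => commH i j (one_lt_abs_sub i j (by omega)))

lemma commHneginv_posFrom (i : ℤ) (hi : i ≤ -1) (s : ℤ) (hs : 1 ≤ s) (r : ℕ) :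
    Commute (Htilinv m n i) (posFrom m n s r) :=
  comm_posFrom _ s r (fun j h1 _ => commH_ir i j (one_lt_abs_sub i j (by omega)))

lemma commHneg_pIR (i : ℤ) (hi : i ≤ -1) (r : ℕ) :
    Commute (Htil m n i) (pIR m n r) :=
  comm_pIR _ r (fun j h1 _ => commH_il i j (one_lt_abs_sub i j (by omega)))

lemma commHneginv_pIR (i : ℤ) (hi : i ≤ -1) (r : ℕ) :
    Commute (Htilinv m n i) (pIR m n r) :=
  comm_pIR _ r (fun j h1 _ => commH_ii i j (one_lt_abs_sub i j (by omega)))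

/-- the front identity (F): `E A_{r+1} B_{r+1} E = e_2 (N_r P_r)` -/
lemma Fid (r : ℕ) :
    EB m n * negFrom m n 1 (r+1) * posFrom m n 1 (r+1) * EB m n
      = ek m n 2 * (negFrom m n 2 r * posFrom m n 2 r) := by
  have hEP := commE_posFrom (m := m) (n := n) r
  have hEN := commE_negFrom (m := m) (n := n) r
  have hyN := commH1_negFrom2 (m := m) (n := n) r
  rw [negFrom_cons, posFrom_cons, ek_two]
  norm_num
  simp only [mul_assoc]
  rw [← hEP.eq, mulc hyN.symm, mulc hEN.symm]

/-- Ψ : `N_r A_r H_{-(r+1)} = H_{-1} N_r A_r` -/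
lemma Psi (r : ℕ) (hr : (r : ℤ) + 1 ≤ (m : ℤ) - 1) :
    negFrom m n 2 r * negFrom m n 1 r * Htil m n (-((r:ℤ)+1))
      = Htil m n (-1) * (negFrom m n 2 r * negFrom m n 1 r) := by
  induction r with
  | zero => norm_num [negFrom]
  | succ r ih =>
      have hr' : (r : ℤ) + 1 ≤ (m : ℤ) - 1 := by push_cast at hr ⊢; omega
      have hcomm : Commute (Htilinv m n (-(2+(r:ℤ)))) (negFrom m n 1 r) :=
        comm_negFrom _ 1 r (fun j h1 h2 => commH_ii _ (-j) (one_lt_abs_sub _ (-j) (by omega)))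
      have hbr := braid_c3 (m := m) (n := n) (-(2+(r:ℤ))) (-(1+(r:ℤ)))
        (by ring) (validN (2+r) (by omega) (by push_cast at hr ⊢; omega))
        (validN (1+r) (by omega) (by push_cast at hr ⊢; omega))
      have hA : negFrom m n 2 (r+1) = negFrom m n 2 r * Htilinv m n (-(2+(r:ℤ))) := by
        rw [negFrom]
      have hB : negFrom m n 1 (r+1) = negFrom m n 1 r * Htilinv m n (-(1+(r:ℤ))) := by
        rw [negFrom]
      have hT : Htil m n (-(((r+1:ℕ):ℤ)+1)) = Htil m n (-(2+(r:ℤ))) := by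
        congr 1; push_cast; ring
      have hT1 : Htil m n (-(1+(r:ℤ))) = Htil m n (-((r:ℤ)+1)) := by
        congr 1; ring
      rw [hA, hB, hT]
      calc negFrom m n 2 r * Htilinv m n (-(2+(r:ℤ))) * (negFrom m n 1 r * Htilinv m n (-(1+(r:ℤ)))) *
            Htil m n (-(2+(r:ℤ)))
          = negFrom m n 2 r * (negFrom m n 1 r *
              (Htilinv m n (-(2+(r:ℤ))) * Htilinv m n (-(1+(r:ℤ))) * Htil m n (-(2+(r:ℤ))))) := by
            simp only [mul_assoc]; rw [mulc hcomm]
        _ = negFrom m n 2 r * (negFrom m n 1 r *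
              (Htil m n (-(1+(r:ℤ))) * Htilinv m n (-(2+(r:ℤ))) * Htilinv m n (-(1+(r:ℤ))))) := by
            rw [hbr]
        _ = negFrom m n 2 r * negFrom m n 1 r * Htil m n (-((r:ℤ)+1)) *
              (Htilinv m n (-(2+(r:ℤ))) * Htilinv m n (-(1+(r:ℤ)))) := by
            rw [← hT1]; simp only [mul_assoc]
        _ = Htil m n (-1) * (negFrom m n 2 r * negFrom m n 1 r) *
              (Htilinv m n (-(2+(r:ℤ))) * Htilinv m n (-(1+(r:ℤ)))) := by
            rw [ih hr']
        _ = Htil m n (-1) * (negFrom m n 2 r * Htilinv m n (-(2+(r:ℤ))) *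
              (negFrom m n 1 r * Htilinv m n (-(1+(r:ℤ))))) := by
            simp only [mul_assoc]; rw [mulc hcomm.symm]

/-- Φ : `H_1 (P_r B_r) = P_r B_{r+1}` -/
lemma Phi (r : ℕ) (hr : (r : ℤ) + 1 ≤ (n : ℤ) - 1) :
    Htil m n 1 * (posFrom m n 2 r * posFrom m n 1 r)
      = posFrom m n 2 r * posFrom m n 1 (r+1) := by
  induction r with
  | zero => norm_num [posFrom]
  | succ r ih =>
      have hr' : (r : ℤ) + 1 ≤ (n : ℤ) - 1 := by push_cast at hr ⊢; omega
      have hcomm : Commute (Htil m n (2+(r:ℤ))) (posFrom m n 1 r) :=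
        comm_posFrom _ 1 r (fun j h1 h2 => commH _ j (one_lt_abs_sub _ j (by omega)))
      have hbr := braidH (m := m) (n := n) (1+(r:ℤ)) (2+(r:ℤ))
        (by ring) (validP (1+r) (by omega) (by push_cast at hr ⊢; omega))
        (validP (2+r) (by omega) (by push_cast at hr ⊢; omega))
      have hA : posFrom m n 2 (r+1) = posFrom m n 2 r * Htil m n (2+(r:ℤ)) := by
        rw [posFrom]
      have hB : posFrom m n 1 (r+1) = posFrom m n 1 r * Htil m n (1+(r:ℤ)) := by
        rw [posFrom]
      have hC : posFrom m n 1 (r+1+1) = posFrom m n 1 (r+1) * Htil m n (2+(r:ℤ)) := by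
        rw [posFrom]; congr 2; push_cast; ring
      rw [hA, hC, hB]
      calc Htil m n 1 * (posFrom m n 2 r * Htil m n (2+(r:ℤ)) *
            (posFrom m n 1 r * Htil m n (1+(r:ℤ))))
          = Htil m n 1 * (posFrom m n 2 r * posFrom m n 1 r) *
              (Htil m n (2+(r:ℤ)) * Htil m n (1+(r:ℤ))) := by
            simp only [mul_assoc]; rw [mulc hcomm]
        _ = posFrom m n 2 r * posFrom m n 1 r *
              (Htil m n (1+(r:ℤ)) * Htil m n (2+(r:ℤ)) * Htil m n (1+(r:ℤ))) := by
            rw [ih hr', hB]; simp only [mul_assoc]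
        _ = posFrom m n 2 r * posFrom m n 1 r *
              (Htil m n (2+(r:ℤ)) * Htil m n (1+(r:ℤ)) * Htil m n (2+(r:ℤ))) := by
            rw [hbr]
        _ = posFrom m n 2 r * Htil m n (2+(r:ℤ)) *
              (posFrom m n 1 r * Htil m n (1+(r:ℤ)) * Htil m n (2+(r:ℤ))) := by
            simp only [mul_assoc]; rw [mulc hcomm.symm]

lemma tel1 (r : ℕ) : pIR m n r * posFrom m n 1 r = 1 := by
  induction r with
  | zero => simp [pIR, posFrom]
  | succ r ih =>
      rw [pIR, posFrom]
      have e2 : Htil m n ((1:ℤ)+((r:ℕ):ℤ)) = Htil m n ((r:ℤ)+1) := by congr 1; ring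
      rw [e2]
      calc Htilinv m n ((r:ℤ)+1) * pIR m n r * (posFrom m n 1 r * Htil m n ((r:ℤ)+1))
          = Htilinv m n ((r:ℤ)+1) * (pIR m n r * posFrom m n 1 r) * Htil m n ((r:ℤ)+1) := by
            simp only [mul_assoc]
        _ = Htilinv m n ((r:ℤ)+1) * Htil m n ((r:ℤ)+1) := by rw [ih, mul_one]
        _ = 1 := Htilinv_mul_Htil _

lemma tel2 (r : ℕ) : pIR m n r * Htil m n ((r:ℤ)+1) * posFrom m n 1 r
    = Htilinv m n (r:ℤ) * Htil m n ((r:ℤ)+1) * Htil m n (r:ℤ) := by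
  cases r with
  | zero =>
      norm_num [pIR, posFrom]
      rw [Htil_invalid 0 not_valid_zero, Htilinv_invalid 0 not_valid_zero]
      norm_num
  | succ s =>
      have hc1 : Commute (Htil m n (((s:ℤ)+1)+1)) (pIR m n s) :=
        comm_pIR _ s (fun j h1 h2 => commH_il _ j (one_lt_abs_sub _ j (by omega)))
      have hG1 : Htilinv m n (((s+1:ℕ):ℤ)) = Htilinv m n ((s:ℤ)+1) := by norm_cast
      have hG3 : Htil m n (((s+1:ℕ):ℤ)+1) = Htil m n (((s:ℤ)+1)+1) := by norm_cast
      have hG2 : Htil m n (((s+1:ℕ):ℤ)) = Htil m n ((s:ℤ)+1) := by norm_cast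
      have hA : pIR m n (s+1) = Htilinv m n ((s:ℤ)+1) * pIR m n s := by rw [pIR]
      have hB : posFrom m n 1 (s+1) = posFrom m n 1 s * Htil m n ((s:ℤ)+1) := by
        rw [posFrom]; congr 2; ring
      rw [hG1, hG2, hG3, hA, hB]
      calc Htilinv m n ((s:ℤ)+1) * pIR m n s * Htil m n (((s:ℤ)+1)+1) *
            (posFrom m n 1 s * Htil m n ((s:ℤ)+1))
          = Htilinv m n ((s:ℤ)+1) * (Htil m n (((s:ℤ)+1)+1) *
              (pIR m n s * posFrom m n 1 s * Htil m n ((s:ℤ)+1))) := by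
            simp only [mul_assoc]; rw [mulc hc1.symm]
        _ = Htilinv m n ((s:ℤ)+1) * Htil m n (((s:ℤ)+1)+1) * Htil m n ((s:ℤ)+1) := by
            rw [tel1, one_mul, mul_assoc]

end WBaux
namespace WBaux

variable {m n : ℕ}

/-- relation (7): `e₂ H₋₁ = e₂ H₁`. -/
lemma SR_two (h1 : validIdx m n 1) (hm1 : validIdx m n (-1)) :
    ek m n 2 * Htil m n (-1) = ek m n 2 * Htil m n 1 := by
  have key := RingQuot.mkAlgHom_rel KK (WBrel.rel7 (m := m) (n := n) h1 hm1)
  simp only [map_mul, HB_eq, EB_eq, fHinv_eq] at key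
  rw [ek_two, Htil_eq 1 h1, Htil_eq (-1) hm1]
  exact key

/-- top-index right shift relation : `e_{k+1} H₋ₖ = e_{k+1} Hₖ`. -/
lemma SR_top (k : ℕ) (hk1 : 1 ≤ k) (hm2 : (k:ℤ) ≤ (m:ℤ)-1) (hn2 : (k:ℤ) ≤ (n:ℤ)-1) :
    ek m n (k+1) * Htil m n (-(k:ℤ)) = ek m n (k+1) * Htil m n (k:ℤ) := by
  have h1 : validIdx m n 1 := validP 1 (by omega) (by omega)
  have hm1 : validIdx m n (-1) := validN 1 (by omega) (by omega)
  obtain ⟨r, rfl⟩ : ∃ r, k = r + 1 := ⟨k - 1, by omega⟩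
  rcases Nat.eq_zero_or_pos r with rfl | hr
  · have c1 : Htil m n (-((0+1:ℕ):ℤ)) = Htil m n (-1) := by norm_num
    have c2 : Htil m n (((0+1:ℕ):ℤ)) = Htil m n 1 := by norm_num
    rw [c1, c2]
    exact SR_two h1 hm1
  -- now r ≥ 1
  have hXc : Htil m n (-((r+1:ℕ):ℤ)) = Htil m n (-((r:ℤ)+1)) := by norm_cast
  have hYc : Htil m n (((r+1:ℕ):ℤ)) = Htil m n ((r:ℤ)+1) := by norm_cast
  rw [hXc, hYc]
  set X := Htil m n (-((r:ℤ)+1)) with hX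
  set Y := Htil m n ((r:ℤ)+1) with hY
  have hm2' : ((r:ℤ))+1 ≤ (m:ℤ)-1 := by push_cast at hm2; omega
  have hn2' : ((r:ℤ))+1 ≤ (n:ℤ)-1 := by push_cast at hn2; omega
  -- commutation facts
  have habs1 : (2:ℤ) ≤ |(-((r:ℤ)+1))| := two_le_abs _ (Or.inr (by omega))
  have habs1' : ((r:ℤ)) + 1 ≤ |(-((r:ℤ)+1))| := by
    have := abs_choice (-((r:ℤ)+1)); have := abs_nonneg (-((r:ℤ)+1)); omega
  have habs2 : (2:ℤ) ≤ |((r:ℤ)+1)| := two_le_abs _ (Or.inl (by omega))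
  have habs2' : ((r:ℤ)) + 1 ≤ |((r:ℤ)+1)| := by
    have := abs_choice ((r:ℤ)+1); have := abs_nonneg ((r:ℤ)+1); omega
  have hXer : Commute X (ek m n r) := comm_ek _ r habs1 habs1'
  have hYer : Commute Y (ek m n r) := comm_ek _ r habs2 habs2'
  have hXBr : Commute X (posFrom m n 1 r) := commHneg_posFrom _ (by omega) 1 (by omega) r
  have hPA : Commute (posFrom m n 2 r) (negFrom m n 1 r) :=
    comm_negFrom _ 1 r (fun j hj1 hj2 => (commHneginv_posFrom (-j) (by omega) 2 (by omega) r).symm)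
  have hPX : Commute (posFrom m n 2 r) X := (commHneg_posFrom _ (by omega) 2 (by omega) r).symm
  have h1N : Commute (Htil m n 1) (negFrom m n 2 r) := commHpos_negFrom 1 (by omega) 2 (by omega) r
  have h1A : Commute (Htil m n 1) (negFrom m n 1 r) := commHpos_negFrom 1 (by omega) 1 (by omega) r
  have hBr1 : posFrom m n 1 (r+1) = posFrom m n 1 r * Y := by
    rw [posFrom]; congr 2; ring
  have LHS_eq : ek m n (r+1+1) * X
      = ek m n 2 * ((negFrom m n 2 r * negFrom m n 1 r) *
          ((posFrom m n 2 r * posFrom m n 1 (r+1)) * ek m n r)) := by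
    calc ek m n (r+1+1) * X
        = (EB m n * negFrom m n 1 (r+1) * posFrom m n 1 (r+1) * EB m n) *
            (negFrom m n 1 r * (X * (posFrom m n 1 r * ek m n r))) := by
          rw [ek_succ, ek_succ]
          simp only [mul_assoc]
          rw [← hXer.eq, mulc hXBr.symm]
      _ = ek m n 2 * (negFrom m n 2 r * posFrom m n 2 r) *
            (negFrom m n 1 r * (X * (posFrom m n 1 r * ek m n r))) := by
          rw [Fid]
      _ = ek m n 2 * (negFrom m n 2 r * negFrom m n 1 r * X *
            (posFrom m n 2 r * (posFrom m n 1 r * ek m n r))) := by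
          simp only [mul_assoc]
          rw [mulc hPA, mulc hPX]
      _ = ek m n 2 * (Htil m n (-1) * (negFrom m n 2 r * negFrom m n 1 r) *
            (posFrom m n 2 r * (posFrom m n 1 r * ek m n r))) := by
          rw [Psi r hm2']
      _ = ek m n 2 * Htil m n (-1) * ((negFrom m n 2 r * negFrom m n 1 r) *
            (posFrom m n 2 r * (posFrom m n 1 r * ek m n r))) := by
          simp only [mul_assoc]
      _ = ek m n 2 * Htil m n 1 * ((negFrom m n 2 r * negFrom m n 1 r) *
            (posFrom m n 2 r * (posFrom m n 1 r * ek m n r))) := by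
          rw [SR_two h1 hm1]
      _ = ek m n 2 * ((negFrom m n 2 r * negFrom m n 1 r) *
            ((Htil m n 1 * (posFrom m n 2 r * posFrom m n 1 r)) * ek m n r)) := by
          simp only [mul_assoc]
          rw [mulc h1N, mulc h1A]
      _ = ek m n 2 * ((negFrom m n 2 r * negFrom m n 1 r) *
            ((posFrom m n 2 r * posFrom m n 1 (r+1)) * ek m n r)) := by
          rw [Phi r hn2']
  have RHS_eq : ek m n (r+1+1) * Y
      = ek m n 2 * ((negFrom m n 2 r * negFrom m n 1 r) *
          ((posFrom m n 2 r * posFrom m n 1 (r+1)) * ek m n r)) := by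
    calc ek m n (r+1+1) * Y
        = (EB m n * negFrom m n 1 (r+1) * posFrom m n 1 (r+1) * EB m n) *
            (negFrom m n 1 r * (posFrom m n 1 r * (Y * ek m n r))) := by
          rw [ek_succ, ek_succ]
          simp only [mul_assoc]
          rw [← hYer.eq]
      _ = ek m n 2 * (negFrom m n 2 r * posFrom m n 2 r) *
            (negFrom m n 1 r * (posFrom m n 1 r * (Y * ek m n r))) := by
          rw [Fid]
      _ = ek m n 2 * ((negFrom m n 2 r * negFrom m n 1 r) *
            ((posFrom m n 2 r * posFrom m n 1 (r+1)) * ek m n r)) := by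
          rw [hBr1]
          simp only [mul_assoc]
          rw [mulc hPA]
  rw [LHS_eq, RHS_eq]

/-- right shift relations: `e_{k+1} H₋ⱼ = e_{k+1} Hⱼ` for `1 ≤ j ≤ k`. -/
lemma SR (k : ℕ) (j : ℕ) (hj1 : 1 ≤ j) (hjk : j ≤ k)
    (hm2 : (k:ℤ) ≤ (m:ℤ)-1) (hn2 : (k:ℤ) ≤ (n:ℤ)-1) :
    ek m n (k+1) * Htil m n (-(j:ℤ)) = ek m n (k+1) * Htil m n (j:ℤ) := by
  induction k with
  | zero => omega
  | succ r ih =>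
      rcases Nat.lt_or_ge j (r+1) with hlt | hge
      · have hjr : j ≤ r := by omega
        rw [ek_succ]
        simp only [mul_assoc]
        rw [ih hjr (by push_cast at hm2 ⊢; omega) (by push_cast at hn2 ⊢; omega)]
      · have : j = r + 1 := by omega
        subst this
        exact SR_top (r+1) hj1 hm2 hn2

lemma SRinv (k : ℕ) (j : ℕ) (hj1 : 1 ≤ j) (hjk : j ≤ k)
    (hm2 : (k:ℤ) ≤ (m:ℤ)-1) (hn2 : (k:ℤ) ≤ (n:ℤ)-1) :
    ek m n (k+1) * Htilinv m n (-(j:ℤ)) = ek m n (k+1) * Htilinv m n (j:ℤ) := by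
  set X := ek m n (k+1)
  have hcomm : Htilinv m n (j:ℤ) * Htilinv m n (-(j:ℤ))
      = Htilinv m n (-(j:ℤ)) * Htilinv m n (j:ℤ) :=
    (commH_ii (j:ℤ) (-(j:ℤ)) (one_lt_abs_sub _ _ (by omega))).eq
  calc X * Htilinv m n (-(j:ℤ))
      = X * Htil m n (j:ℤ) * Htilinv m n (j:ℤ) * Htilinv m n (-(j:ℤ)) := by
        rw [mul_assoc X, Htil_mul_Htilinv, mul_one]
    _ = X * Htil m n (-(j:ℤ)) * Htilinv m n (j:ℤ) * Htilinv m n (-(j:ℤ)) := by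
        rw [← SR k j hj1 hjk hm2 hn2]
    _ = X * Htil m n (-(j:ℤ)) * Htilinv m n (-(j:ℤ)) * Htilinv m n (j:ℤ) := by
        simp only [mul_assoc]; rw [hcomm]
    _ = X * Htilinv m n (j:ℤ) := by
        rw [mul_assoc X, Htil_mul_Htilinv, mul_one]

/-- (SR-prod): `e_{k+1} A_r = e_{k+1} (H_r⁻¹ ⋯ H_1⁻¹)` for `r ≤ k`. -/
lemma SRprod (k : ℕ) (r : ℕ) (hrk : r ≤ k)
    (hm2 : (k:ℤ) ≤ (m:ℤ)-1) (hn2 : (k:ℤ) ≤ (n:ℤ)-1) :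
    ek m n (k+1) * negFrom m n 1 r = ek m n (k+1) * pIR m n r := by
  induction r with
  | zero => rfl
  | succ r ih =>
      have hc : Commute (Htilinv m n (-((1:ℤ)+(r:ℤ)))) (pIR m n r) :=
        commHneginv_pIR _ (by omega) r
      have hcast : Htilinv m n (-((r+1:ℕ):ℤ)) = Htilinv m n (-((1:ℤ)+(r:ℤ))) := by
        congr 1; push_cast; ring
      have hcast2 : Htilinv m n (((r+1:ℕ):ℤ)) = Htilinv m n ((r:ℤ)+1) := by norm_cast
      calc ek m n (k+1) * negFrom m n 1 (r+1)
          = ek m n (k+1) * negFrom m n 1 r * Htilinv m n (-((1:ℤ)+(r:ℤ))) := by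
            rw [negFrom, ← mul_assoc]
        _ = ek m n (k+1) * pIR m n r * Htilinv m n (-((1:ℤ)+(r:ℤ))) := by
            rw [ih (by omega)]
        _ = ek m n (k+1) * Htilinv m n (-((1:ℤ)+(r:ℤ))) * pIR m n r := by
            simp only [mul_assoc]; rw [hc.symm.eq]
        _ = ek m n (k+1) * Htilinv m n ((r:ℤ)+1) * pIR m n r := by
            rw [← hcast, SRinv k (r+1) (by omega) (by omega) hm2 hn2, hcast2]
        _ = ek m n (k+1) * pIR m n (r+1) := by
            rw [pIR, ← mul_assoc]

end WBaux
namespace WBaux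

variable {m n : ℕ}

def Sel (m n : ℕ) : ℕ → WB m n
  | 0 => 1
  | 1 => sc m n tv * EB m n
  | (k+2) => sc m n dD *
      (EB m n * negFrom m n 1 (k+1) * posFrom m n 1 (k+1) * Sel m n (k+1))

lemma comm_sc (x : WB m n) (c : KK) : Commute x (sc m n c) := by
  show x * sc m n c = sc m n c * x
  exact sc_comm c x

lemma comm_Sel (i : ℤ) (k : ℕ) (h2 : 2 ≤ |i|) (hk : (k : ℤ) + 1 ≤ |i|) :
    Commute (Htil m n i) (Sel m n k) := by
  induction k with
  | zero => rw [Sel]; exact Commute.one_right _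
  | succ k ih =>
      match k, ih with
      | 0, _ =>
          rw [Sel]
          exact Commute.mul_right (comm_sc _ _) ((commE i h2).symm)
      | (k+1), ih =>
          rw [Sel]
          have habs := abs_choice i
          refine Commute.mul_right (comm_sc _ _) (Commute.mul_right (Commute.mul_right
            (Commute.mul_right ((commE i h2).symm) ?_) ?_) (ih (by omega)))
          · exact comm_negFrom _ 1 (k+1) (fun j hj1 hj2 =>
              commH_il i (-j) (one_lt_abs_sub i (-j) (by omega)))
          · exact comm_posFrom _ 1 (k+1) (fun j hj1 hj2 =>
              commH i j (one_lt_abs_sub i j (by omega)))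

/-- Main lemma : `e_k H_k e_k = Sel k = e_k H_{-k} e_k`. -/
lemma G (k : ℕ) (hk1 : 1 ≤ k) (hm2 : (k:ℤ) ≤ (m:ℤ)-1) (hn2 : (k:ℤ) ≤ (n:ℤ)-1) :
    ek m n k * Htil m n (k:ℤ) * ek m n k = Sel m n k ∧
    ek m n k * Htil m n (-(k:ℤ)) * ek m n k = Sel m n k := by
  induction k with
  | zero => omega
  | succ r ih =>
      rcases Nat.eq_zero_or_pos r with rfl | hr
      · -- base case k = 1
        have h1 : validIdx m n 1 := validP 1 (by omega) (by omega)
        have hm1 : validIdx m n (-1) := validN 1 (by omega) (by omega)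
        simp only [Nat.zero_add, Nat.cast_one]
        rw [ek_one, Sel]
        exact ⟨eHe 1 h1 (Or.inl rfl), eHe (-1) hm1 (Or.inr rfl)⟩
      -- inductive step, r ≥ 1
      obtain ⟨s, rfl⟩ : ∃ s, r = s + 1 := ⟨r - 1, by omega⟩
      set r := s + 1 with hrdef
      have hm2' : (r:ℤ) ≤ (m:ℤ)-1 := by rw [hrdef]; push_cast at hm2 ⊢; omega
      have hn2' : (r:ℤ) ≤ (n:ℤ)-1 := by rw [hrdef]; push_cast at hn2 ⊢; omega
      have hmr : (1:ℤ) ≤ (r:ℤ) := by rw [hrdef]; push_cast; omega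
      obtain ⟨IHp, IHn⟩ := ih (by omega) hm2' hn2'
      -- index casts
      have cY : Htil m n (((r+1:ℕ)):ℤ) = Htil m n ((r:ℤ)+1) := by norm_cast
      have cZ : Htil m n (-((r+1:ℕ):ℤ)) = Htil m n (-((r:ℤ)+1)) := by norm_cast
      -- abbreviations
      set er := ek m n r with her
      set K := ek m n (r+1) with hK
      set Ar := negFrom m n 1 r with hAr
      set Br := posFrom m n 1 r with hBr
      set x := Htil m n ((r:ℤ)+1) with hx
      set xinv := Htilinv m n ((r:ℤ)+1) with hxinv
      set w := Htil m n (r:ℤ) with hw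
      set winv := Htilinv m n (r:ℤ) with hwinv
      set z := Htil m n (-((r:ℤ)+1)) with hz
      set zinv := Htilinv m n (-((r:ℤ)+1)) with hzinv
      set u := Htil m n (-(r:ℤ)) with hu
      set uinv := Htilinv m n (-(r:ℤ)) with huinv
      -- commutation facts
      have habsx : (2:ℤ) ≤ |((r:ℤ)+1)| := two_le_abs _ (Or.inl (by omega))
      have habsx' : (r:ℤ)+1 ≤ |((r:ℤ)+1)| := by
        have := abs_choice ((r:ℤ)+1); have := abs_nonneg ((r:ℤ)+1); omega
      have habsz : (2:ℤ) ≤ |(-((r:ℤ)+1))| := two_le_abs _ (Or.inr (by omega))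
      have habsz' : (r:ℤ)+1 ≤ |(-((r:ℤ)+1))| := by
        have := abs_choice (-((r:ℤ)+1)); have := abs_nonneg (-((r:ℤ)+1)); omega
      have hxE : Commute x (EB m n) := (commE _ habsx).symm
      have hzE : Commute z (EB m n) := (commE _ habsz).symm
      have hxAr : Commute x Ar := commHpos_negFrom _ (by omega) 1 (by omega) r
      have hxer : Commute x er := comm_ek _ r habsx (by omega)
      have hxinver : Commute xinv er := comm_ek' _ r habsx (by omega)
      have hzer : Commute z er := comm_ek _ r habsz (by omega)
      have hzinver : Commute zinv er := comm_ek' _ r habsz (by omega)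
      have hxSel : Commute x (Sel m n r) := comm_Sel _ r habsx (by omega)
      have hzSel : Commute z (Sel m n r) := comm_Sel _ r habsz (by omega)
      have hsr : K * Ar = K * pIR m n r := SRprod r r le_rfl hm2' hn2'
      have hSeleq : Sel m n (r+1) = sc m n dD * (EB m n * Ar * Br * Sel m n r) := by
        rw [hrdef, Sel, ← hrdef]
      have hekE : K * EB m n = sc m n dD * K := ek_E (r+1) (by omega)
      have hKexp : K = EB m n * Ar * Br * er := ek_succ r
      constructor
      · -- positive side
        have hbr : winv * x * w = x * w * xinv := braid_c1 (r:ℤ) ((r:ℤ)+1) rfl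
          (validP (r:ℤ) (by omega) (by omega)) (validP ((r:ℤ)+1) (by omega) (by omega))
        have htel : pIR m n r * x * Br = winv * x * w := tel2 r
        have hxx : x * xinv = 1 := Htil_mul_Htilinv _
        rw [cY]
        calc K * x * K
            = K * (EB m n * (Ar * (x * (Br * er)))) := by
              conv_lhs => rw [hKexp]
              conv_rhs => rw [hKexp]
              simp only [mul_assoc]
              rw [mulc hxE, mulc hxAr]
          _ = (K * EB m n) * (Ar * (x * (Br * er))) := by rw [mul_assoc]
          _ = sc m n dD * (K * Ar * (x * (Br * er))) := by
              rw [hekE]; simp only [mul_assoc]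
          _ = sc m n dD * (K * pIR m n r * (x * (Br * er))) := by rw [hsr]
          _ = sc m n dD * (K * (pIR m n r * x * Br * er)) := by
              simp only [mul_assoc]
          _ = sc m n dD * (K * (winv * x * w * er)) := by rw [htel]
          _ = sc m n dD * (K * (x * w * xinv * er)) := by rw [hbr]
          _ = sc m n dD * (EB m n * (Ar * (Br * (x * (er * (w * (er * xinv))))))) := by
              conv_lhs => rw [hKexp]
              simp only [mul_assoc]
              rw [mulc hxer.symm, hxinver.eq]
          _ = sc m n dD * (EB m n * (Ar * (Br * (x * (Sel m n r * xinv))))) := by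
              rw [show er * (w * (er * xinv)) = (er * w * er) * xinv by
                simp only [mul_assoc], IHp]
          _ = sc m n dD * (EB m n * (Ar * (Br * (Sel m n r * (x * xinv))))) := by
              rw [mulc hxSel]
          _ = sc m n dD * (EB m n * Ar * Br * Sel m n r) := by
              rw [hxx, mul_one]; simp only [mul_assoc]
          _ = Sel m n (r+1) := hSeleq.symm
      · -- negative side
        have hbr2 : z * uinv = uinv * zinv * u * z := braid_c2 (-((r:ℤ)+1)) (-(r:ℤ))
          (by ring) (validN ((r:ℤ)+1) (by omega) (by omega)) (validN (r:ℤ) (by omega) (by omega))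
        have hzA' : Commute z (negFrom m n 1 s) :=
          comm_negFrom _ 1 s (fun j hj1 hj2 =>
            commH_il _ (-j) (one_lt_abs_sub _ (-j) (by rw [hrdef]; push_cast; omega)))
        have hterm : Htilinv m n (-(1+(s:ℤ))) = uinv := by
          rw [huinv]; congr 1; rw [hrdef]; push_cast; ring
        have hAs : Ar = negFrom m n 1 s * uinv := by
          rw [hAr, hrdef, negFrom, hterm]
        have hzAr : z * Ar = Ar * (zinv * u * z) := by
          rw [hAs]
          calc z * (negFrom m n 1 s * uinv)
              = negFrom m n 1 s * (z * uinv) := by rw [mulc hzA']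
            _ = negFrom m n 1 s * (uinv * zinv * u * z) := by rw [hbr2]
            _ = negFrom m n 1 s * uinv * (zinv * u * z) := by
                simp only [mul_assoc]
        have hpirz : Commute z (pIR m n r) := commHneg_pIR _ (by omega) r
        have hpirzi : Commute zinv (pIR m n r) := commHneginv_pIR _ (by omega) r
        have hpiru : Commute u (pIR m n r) := commHneg_pIR _ (by omega) r
        have htel1 : pIR m n r * Br = 1 := tel1 r
        have hzz : zinv * z = 1 := Htilinv_mul_Htil _
        rw [cZ]
        calc K * z * K
            = K * (EB m n * (z * (Ar * (Br * er)))) := by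
              conv_lhs => rw [hKexp]
              conv_rhs => rw [hKexp]
              simp only [mul_assoc]
              rw [mulc hzE]
          _ = (K * EB m n) * (z * Ar * (Br * er)) := by
              simp only [mul_assoc]
          _ = sc m n dD * (K * (Ar * (zinv * u * z) * (Br * er))) := by
              rw [hekE, hzAr]; simp only [mul_assoc]
          _ = sc m n dD * (K * Ar * ((zinv * u * z) * (Br * er))) := by
              simp only [mul_assoc]
          _ = sc m n dD * (K * pIR m n r * ((zinv * u * z) * (Br * er))) := by
              rw [hsr]
          _ = sc m n dD * (K * (zinv * (u * (z * (pIR m n r * Br) * er)))) := by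
              simp only [mul_assoc]
              rw [mulc hpirzi.symm, mulc hpiru.symm, mulc hpirz.symm]
          _ = sc m n dD * (K * (zinv * (u * (z * er)))) := by
              rw [htel1, mul_one]
          _ = sc m n dD * (EB m n * (Ar * (Br * (zinv * (er * (u * (er * z))))))) := by
              conv_lhs => rw [hKexp]
              simp only [mul_assoc]
              rw [mulc hzinver.symm, hzer.eq]
          _ = sc m n dD * (EB m n * (Ar * (Br * (zinv * (Sel m n r * z))))) := by
              rw [show er * (u * (er * z)) = (er * u * er) * z by
                simp only [mul_assoc], IHn]
          _ = sc m n dD * (EB m n * (Ar * (Br * ((zinv * z) * Sel m n r)))) := by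
              rw [← hzSel.eq]; simp only [mul_assoc]
          _ = sc m n dD * (EB m n * Ar * Br * Sel m n r) := by
              rw [hzz, one_mul]; simp only [mul_assoc]
          _ = Sel m n (r+1) := hSeleq.symm
end WBaux
/-- For `1 ≤ k ≤ min{m,n} - 1`, one has `e_k H_{-k} H_k⁻¹ e_k = e_k H_{-k}⁻¹ H_k e_k`. -/
theorem ek_H_swap (m n : ℕ) (hm : 1 ≤ m) (hn : 1 ≤ n) (k : ℕ)
    (hk1 : 1 ≤ k) (hk : k + 1 ≤ min m n) :
    ek m n k * Htil m n (-(k : ℤ)) * Htilinv m n (k : ℤ) * ek m n k =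
      ek m n k * Htilinv m n (-(k : ℤ)) * Htil m n (k : ℤ) * ek m n k := by
  have hmm : k + 1 ≤ m := hk.trans (Nat.min_le_left m n)
  have hnn : k + 1 ≤ n := hk.trans (Nat.min_le_right m n)
  have hvP : validIdx m n (k:ℤ) := WBaux.validP _ (by omega) (by omega)
  have hvN : validIdx m n (-(k:ℤ)) := WBaux.validN (k:ℤ) (by omega) (by omega)
  obtain ⟨G1, G2⟩ := WBaux.G (m := m) (n := n) k hk1 (by omega) (by omega)
  have L : ek m n k * Htil m n (-(k:ℤ)) * WBaux.sc m n (qv - qv⁻¹) * ek m n k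
      = WBaux.sc m n (qv - qv⁻¹) * WBaux.Sel m n k := by
    calc ek m n k * Htil m n (-(k:ℤ)) * WBaux.sc m n (qv - qv⁻¹) * ek m n k
        = WBaux.sc m n (qv - qv⁻¹) * (ek m n k * Htil m n (-(k:ℤ)) * ek m n k) := by
          rw [WBaux.sc_comm]; simp only [mul_assoc]
      _ = WBaux.sc m n (qv - qv⁻¹) * WBaux.Sel m n k := by rw [G2]
  have R : ek m n k * WBaux.sc m n (qv - qv⁻¹) * Htil m n ((k:ℤ)) * ek m n k
      = WBaux.sc m n (qv - qv⁻¹) * WBaux.Sel m n k := by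
    calc ek m n k * WBaux.sc m n (qv - qv⁻¹) * Htil m n ((k:ℤ)) * ek m n k
        = WBaux.sc m n (qv - qv⁻¹) * (ek m n k * Htil m n ((k:ℤ)) * ek m n k) := by
          rw [WBaux.sc_comm]; simp only [mul_assoc]
      _ = WBaux.sc m n (qv - qv⁻¹) * WBaux.Sel m n k := by rw [G1]
  rw [WBaux.Htilinv_eq' (k:ℤ) hvP, WBaux.Htilinv_eq' (-(k:ℤ)) hvN]
  set A := ek m n k with hA
  set X := Htil m n (-(k:ℤ)) with hX
  set Y := Htil m n ((k:ℤ)) with hY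
  set C := WBaux.sc m n (qv - qv⁻¹) with hC
  have h1 : A*X*(Y - C)*A = A*X*Y*A - A*X*C*A :=
    (congrArg (fun t => t * A) (mul_sub (A*X) Y C)).trans (sub_mul (A*X*Y) (A*X*C) A)
  have h2 : A*(X - C)*Y*A = A*X*Y*A - A*C*Y*A := by
    have e1 : A*(X - C) = A*X - A*C := mul_sub A X C
    have e2 : A*(X - C)*Y = (A*X - A*C)*Y := congrArg (fun t => t * Y) e1
    have e3 : (A*X - A*C)*Y = A*X*Y - A*C*Y := sub_mul (A*X) (A*C) Y
    have e4 : A*(X - C)*Y*A = (A*X*Y - A*C*Y)*A := congrArg (fun t => t * A) (e2.trans e3)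
    exact e4.trans (sub_mul (A*X*Y) (A*C*Y) A)
  rw [h1, h2, L, R]

end
end

section
/- In B_{m,n}(q,t), the elements e_k are invariant under the bar involution: ē_k = e_k for all 0 ≤ k ≤ min{m,n}. -/
open scoped Classical

noncomputable section

/-!
Write `g i = H_{-i}`, `h i = H_i`, `c i = (g i)⁻¹ h i` and `c̄ i = g i (h i)⁻¹`. The
recursion reads `e_{k+1} = e (c 1 ⋯ c k) e_k`, and induction gives the mirror form
`e_{k+1} = e_k (c k ⋯ c 1) e`. A ring endomorphism inverting every `H_i` and fixing `e` sends
`e_{k+1}` to `e (c̄ 1 ⋯ c̄ k) ē_k`, so it suffices that `e (c̄ 1 ⋯ c̄ k) e_k = e_{k+1}`. Peeling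
off the last factor and using the mirror form, this reduces to
`e_{p+1} c̄ (p+1) D e = e_{p+1} c (p+1) D e` with `D = c p ⋯ c 1`. The quadratic relation gives
`c̄ i - c i = (q - q⁻¹) (h i - g i)`, and both `e_{p+1} h (p+1) D e` and `e_{p+1} g (p+1) D e`
equal `t e_{p+1}`: next to `e_{p+1}` one may trade `g i` for `h i` when `i ≤ p` (from relation
(7)), after which the braid relations conjugate the cycle `h (p+1) ⋯ h 1`, resp. `g 1 ⋯ g (p+1)`,
so that `e h 1 e = t e`, resp. `e g 1 e = t e`, applies.
-/

/-! ### Ordered products in a monoid -/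

section OrderedProducts

variable {M : Type*} [Monoid M] (s t : ℕ → M) (a p : ℕ)

def ascProd (s : ℕ → M) : ℕ → ℕ → M
  | _, 0 => 1
  | a, p + 1 => s a * ascProd s (a + 1) p

def descProd (s : ℕ → M) (a : ℕ) : ℕ → M
  | 0 => 1
  | p + 1 => s (a + p) * descProd s a p

@[simp] lemma ascProd_zero : ascProd s a 0 = 1 := rfl

lemma ascProd_succ : ascProd s a (p + 1) = s a * ascProd s (a + 1) p := rfl

@[simp] lemma descProd_zero : descProd s a 0 = 1 := rfl

lemma descProd_succ : descProd s a (p + 1) = s (a + p) * descProd s a p := rfl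

lemma ascProd_succ' : ascProd s a (p + 1) = ascProd s a p * s (a + p) := by
  induction p generalizing a with
  | zero => simp [ascProd_succ]
  | succ p ih => rw [ascProd_succ, ih, ascProd_succ, mul_assoc, Nat.add_right_comm, add_assoc]

lemma descProd_succ' : descProd s a (p + 1) = descProd s (a + 1) p * s a := by
  induction p with
  | zero => simp [descProd_succ]
  | succ p ih => rw [descProd_succ, ih, descProd_succ, mul_assoc, Nat.add_right_comm, add_assoc]

lemma ascProd_one_eq_prod_range :
    ascProd s 1 p = ((List.range p).map fun j ↦ s (j + 1)).prod := by
  induction p with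
  | zero => rfl
  | succ p ih => rw [ascProd_succ', ih, List.range_succ, List.map_append, List.prod_append,
      List.map_singleton, List.prod_singleton, Nat.add_comm]

lemma ascProd_add_one : ascProd s (a + 1) p = ascProd (fun i ↦ s (i + 1)) a p := by
  induction p generalizing a with
  | zero => rfl
  | succ p ih => rw [ascProd_succ, ih, ascProd_succ]

lemma descProd_add_one : descProd s (a + 1) p = descProd (fun i ↦ s (i + 1)) a p := by
  induction p with
  | zero => rfl
  | succ p ih => rw [descProd_succ, ih, descProd_succ, Nat.add_right_comm]

lemma map_ascProd {N F : Type*} [Monoid N] [FunLike F M N] [MonoidHomClass F M N] (f : F) :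
    f (ascProd s a p) = ascProd (fun i ↦ f (s i)) a p := by
  induction p generalizing a with
  | zero => simp
  | succ p ih => rw [ascProd_succ, map_mul, ih, ascProd_succ]

lemma map_descProd {N F : Type*} [Monoid N] [FunLike F M N] [MonoidHomClass F M N] (f : F) :
    f (descProd s a p) = descProd (fun i ↦ f (s i)) a p := by
  induction p with
  | zero => simp
  | succ p ih => rw [descProd_succ, map_mul, ih, descProd_succ]

variable {s t a p}

lemma SemiconjBy.ascProd_right {x : M}
    (h : ∀ i, a ≤ i → i < a + p → SemiconjBy x (s i) (t i)) :
    SemiconjBy x (ascProd s a p) (ascProd t a p) := by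
  induction p generalizing a with
  | zero => exact SemiconjBy.one_right x
  | succ p ih =>
    exact (h a le_rfl (by omega)).mul_right (ih fun i hi hip ↦ h i (by omega) (by omega))

lemma SemiconjBy.descProd_right {x : M}
    (h : ∀ i, a ≤ i → i < a + p → SemiconjBy x (s i) (t i)) :
    SemiconjBy x (descProd s a p) (descProd t a p) := by
  induction p with
  | zero => exact SemiconjBy.one_right x
  | succ p ih =>
    exact (h (a + p) (by omega) (by omega)).mul_right (ih fun i hi hip ↦ h i hi (by omega))

lemma Commute.ascProd_right {x : M} (h : ∀ i, a ≤ i → i < a + p → Commute x (s i)) :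
    Commute x (ascProd s a p) :=
  SemiconjBy.ascProd_right h

lemma Commute.descProd_right {x : M} (h : ∀ i, a ≤ i → i < a + p → Commute x (s i)) :
    Commute x (descProd s a p) :=
  SemiconjBy.descProd_right h

lemma ascProd_mul_ascProd (h : ∀ i j, Commute (s i) (t j)) :
    ascProd s a p * ascProd t a p = ascProd (fun i ↦ s i * t i) a p := by
  induction p generalizing a with
  | zero => simp
  | succ p ih =>
    have hc : Commute (ascProd s (a + 1) p) (t a) :=
      (Commute.ascProd_right fun i _ _ ↦ (h i a).symm).symm
    rw [ascProd_succ, ascProd_succ, ascProd_succ, ← ih, mul_assoc, mul_assoc,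
      ← mul_assoc (ascProd s _ p), hc.eq]
    simp only [mul_assoc]

lemma descProd_mul_descProd (h : ∀ i j, Commute (s i) (t j)) :
    descProd s a p * descProd t a p = descProd (fun i ↦ s i * t i) a p := by
  induction p with
  | zero => simp
  | succ p ih =>
    have hc : Commute (descProd s a p) (t (a + p)) :=
      (Commute.descProd_right fun i _ _ ↦ (h i (a + p)).symm).symm
    rw [descProd_succ, descProd_succ, descProd_succ, ← ih, mul_assoc, mul_assoc,
      ← mul_assoc (descProd s a p), hc.eq]
    simp only [mul_assoc]

lemma mul_descProd_eq_mul_ascProd {x : M} (hx : ∀ i, a ≤ i → i < a + p → x * s i = x * t i)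
    (h : ∀ i j, Commute (s i) (t j)) : x * descProd s a p = x * ascProd t a p := by
  induction p with
  | zero => rfl
  | succ p ih =>
    have hc : Commute (t (a + p)) (descProd s a p) :=
      Commute.descProd_right fun i _ _ ↦ (h i (a + p)).symm
    rw [descProd_succ, ← mul_assoc, hx _ (by omega) (by omega), mul_assoc, hc.eq, ← mul_assoc,
      ih fun i hi hip ↦ hx i hi (by omega), mul_assoc, ← ascProd_succ']

lemma semiconjBy_descProd_of_braid (hcomm : ∀ i j, i + 2 ≤ j → Commute (s i) (s j))
    (hbraid : ∀ i, a ≤ i → i < a + p → s i * s (i + 1) * s i = s (i + 1) * s i * s (i + 1))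
    {i : ℕ} (hai : a ≤ i) (hip : i < a + p) :
    SemiconjBy (descProd s a (p + 1)) (s (i + 1)) (s i) := by
  induction p with
  | zero => omega
  | succ p ih =>
    rcases Nat.lt_or_ge i (a + p) with hlt | hge
    · exact SemiconjBy.mul_left (hcomm i _ (by omega)).symm
        (ih (fun j hj hjp ↦ hbraid j hj (by omega)) hlt)
    · obtain rfl : i = a + p := by omega
      have hc : Commute (s (a + p + 1)) (descProd s a p) :=
        Commute.descProd_right fun j _ hj ↦ (hcomm j _ (by omega)).symm
      have hsucc : descProd s a (p + 1 + 1) = s (a + p + 1) * (s (a + p) * descProd s a p) := by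
        rw [descProd_succ, descProd_succ, Nat.add_succ]
      calc descProd s a (p + 1 + 1) * s (a + p + 1)
          = s (a + p + 1) * s (a + p) * s (a + p + 1) * descProd s a p := by
            rw [hsucc, mul_assoc, mul_assoc, ← hc.eq]; simp only [mul_assoc]
        _ = s (a + p) * descProd s a (p + 1 + 1) := by
            rw [← hbraid _ hai (by omega), hsucc]; simp only [mul_assoc]

lemma MulOpposite.op_ascProd :
    MulOpposite.op (ascProd s a p) = descProd (fun i ↦ MulOpposite.op (s i)) a p := by
  induction p generalizing a with
  | zero => rfl
  | succ p ih => rw [ascProd_succ, op_mul, ih, descProd_succ']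

lemma semiconjBy_ascProd_of_braid (hcomm : ∀ i j, i + 2 ≤ j → Commute (s i) (s j))
    (hbraid : ∀ i, a ≤ i → i < a + p → s i * s (i + 1) * s i = s (i + 1) * s i * s (i + 1))
    {i : ℕ} (hai : a ≤ i) (hip : i < a + p) :
    SemiconjBy (ascProd s a (p + 1)) (s i) (s (i + 1)) := by
  have := semiconjBy_descProd_of_braid (s := fun i ↦ MulOpposite.op (s i))
    (fun i j hij ↦ (hcomm i j hij).op)
    (fun i hi hip ↦ by simp only [← MulOpposite.op_mul, ← mul_assoc, hbraid i hi hip]) hai hip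
  rw [← MulOpposite.op_ascProd] at this
  exact this.unop

lemma ascProd_inv {G : Type*} [Group G] (s : ℕ → G) (a p : ℕ) :
    (ascProd s a p)⁻¹ = descProd s⁻¹ a p := by
  induction p generalizing a with
  | zero => simp
  | succ p ih => rw [ascProd_succ, mul_inv_rev, ih, descProd_succ' s⁻¹, Pi.inv_apply]

lemma descProd_mul_ascProd_inv {G : Type*} [Group G] (s : ℕ → G) (a p : ℕ) :
    descProd s a p * ascProd s⁻¹ a p = 1 := by
  rw [← inv_inv s, ← ascProd_inv, inv_inv, inv_mul_cancel]

lemma descProd_inv_mul_ascProd {G : Type*} [Group G] (s : ℕ → G) (a p : ℕ) :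
    descProd s⁻¹ a p * ascProd s a p = 1 := by
  rw [← ascProd_inv, inv_mul_cancel]

lemma Units.val_ascProd (s : ℕ → Mˣ) (a p : ℕ) :
    ((ascProd s a p : Mˣ) : M) = ascProd (fun i ↦ (s i : M)) a p :=
  map_ascProd s a p (Units.coeHom M)

lemma Units.val_descProd (s : ℕ → Mˣ) (a p : ℕ) :
    ((descProd s a p : Mˣ) : M) = descProd (fun i ↦ (s i : M)) a p :=
  map_descProd s a p (Units.coeHom M)

end OrderedProducts

/-! ### The generators as units -/

namespace WB

variable {m n : ℕ}

lemma qv_ne_zero : qv ≠ 0 :=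
  (map_ne_zero_iff _ (IsFractionRing.injective (MvPolynomial (Fin 2) ℚ) KK)).mpr
    (MvPolynomial.X_ne_zero 0)

-- On `WB m n` the `Sub` instance of `RingQuot` is not reducibly the one derived from its `Ring`
-- structure, so `rw [sub_mul]` fails and instance search for `IsRightCancelAdd` fails; the
-- additive lemmas are therefore applied as terms.
lemma eq_of_add_right_eq {x y z : WB m n} (h : x + z = y + z) : x = y :=
  (add_neg_cancel_right x z).symm.trans ((congrArg (· + -z) h).trans (add_neg_cancel_right y z))

lemma HB_mul_HBinv (i : ℤ) (hv : validIdx m n i) : HB m n i hv * HBinv m n i hv = 1 := by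
  have hquad :
      (HB m n i hv - algebraMap KK _ qv) * (HB m n i hv + algebraMap KK _ qv⁻¹) = 0 := by
    simpa [HB, fH] using RingQuot.mkAlgHom_rel KK (WBrel.quad i hv)
  have hinv : algebraMap KK (WB m n) qv * algebraMap KK _ qv⁻¹ = 1 := by
    rw [← map_mul, mul_inv_cancel₀ qv_ne_zero, map_one]
  have sub_mul' : ∀ u v w : WB m n, (u - v) * w = u * w - v * w :=
    fun u v w ↦ sub_mul u v w
  have mul_sub' : ∀ u v w : WB m n, u * (v - w) = u * v - u * w :=
    fun u v w ↦ mul_sub u v w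
  calc HB m n i hv * HBinv m n i hv
      = (HB m n i hv - algebraMap KK _ qv) * (HB m n i hv + algebraMap KK _ qv⁻¹)
        + algebraMap KK (WB m n) qv * algebraMap KK _ qv⁻¹ := by
        rw [HBinv, map_sub, mul_sub', mul_sub', sub_mul', mul_add, mul_add, Algebra.commutes qv]
        abel
    _ = 1 := by rw [hquad, hinv, zero_add]

lemma HBinv_mul_HB (i : ℤ) (hv : validIdx m n i) : HBinv m n i hv * HB m n i hv = 1 := by
  rw [← HB_mul_HBinv i hv, HBinv]
  calc (HB m n i hv - algebraMap KK _ (qv - qv⁻¹)) * HB m n i hv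
      = HB m n i hv * HB m n i hv - algebraMap KK _ (qv - qv⁻¹) * HB m n i hv :=
        sub_mul (HB m n i hv) _ _
    _ = HB m n i hv * (HB m n i hv - algebraMap KK _ (qv - qv⁻¹)) := by
        rw [Algebra.commutes]; exact (mul_sub (HB m n i hv) _ _).symm

def Hunit (m n : ℕ) (i : ℤ) : (WB m n)ˣ where
  val := Htil m n i
  inv := Htilinv m n i
  val_inv := by
    unfold Htil Htilinv
    split_ifs with hv
    exacts [HB_mul_HBinv i hv, one_mul 1]
  inv_val := by
    unfold Htil Htilinv
    split_ifs with hv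
    exacts [HBinv_mul_HB i hv, one_mul 1]

lemma Hunit_eq_one {i : ℤ} (hv : ¬ validIdx m n i) : Hunit m n i = 1 :=
  Units.ext (dif_neg hv)

lemma val_Hunit {i : ℤ} (hv : validIdx m n i) : (Hunit m n i : WB m n) = HB m n i hv :=
  dif_pos hv

lemma val_Hunit_eq_inv_add {i : ℤ} (hv : validIdx m n i) :
    (Hunit m n i : WB m n)
      = ((Hunit m n i)⁻¹ : (WB m n)ˣ) + algebraMap KK _ (qv - qv⁻¹) := by
  change _ = Htilinv m n i + _
  rw [Htilinv, dif_pos hv, HBinv, val_Hunit hv]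
  exact (sub_add_cancel (HB m n i hv) _).symm

lemma commute_Hunit {i j : ℤ} (hij : 1 < |i - j|) : Commute (Hunit m n i) (Hunit m n j) := by
  by_cases hi : validIdx m n i
  · by_cases hj : validIdx m n j
    · refine Commute.units_of_val ?_
      rw [val_Hunit hi, val_Hunit hj]
      exact (by simpa [fH, HB] using RingQuot.mkAlgHom_rel KK (WBrel.comm i hi j hj hij) :
        HB m n i hi * HB m n j hj = HB m n j hj * HB m n i hi)
    · rw [Hunit_eq_one hj]; exact Commute.one_right _
  · rw [Hunit_eq_one hi]; exact Commute.one_left _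

lemma commute_EB_Hunit {i : ℤ} (hi : 2 ≤ |i|) : Commute (EB m n) (Hunit m n i) := by
  by_cases hv : validIdx m n i
  · rw [val_Hunit hv]
    exact (by simpa [fH, fE, HB, EB] using RingQuot.mkAlgHom_rel KK (WBrel.commE i hv hi) :
      HB m n i hv * EB m n = EB m n * HB m n i hv).symm
  · rw [Hunit_eq_one hv]; exact Commute.one_right _

lemma Hunit_braid {i : ℤ} (hi : validIdx m n i) (hi1 : validIdx m n (i + 1)) :
    Hunit m n i * Hunit m n (i + 1) * Hunit m n i
      = Hunit m n (i + 1) * Hunit m n i * Hunit m n (i + 1) := by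
  refine Units.ext ?_
  simp only [Units.val_mul, val_Hunit hi, val_Hunit hi1]
  simpa [fH, HB] using RingQuot.mkAlgHom_rel KK (WBrel.braid i hi hi1)

lemma EB_mul_Hunit_mul_EB {i : ℤ} (hv : validIdx m n i) (hi : i = 1 ∨ i = -1) :
    EB m n * Hunit m n i * EB m n = tv • EB m n := by
  rw [val_Hunit hv, Algebra.smul_def]
  simpa [fH, fE, HB, EB] using RingQuot.mkAlgHom_rel KK (WBrel.eHe i hv hi)

def Hneg (m n i : ℕ) : (WB m n)ˣ := Hunit m n (-(i : ℤ))

def Hpos (m n i : ℕ) : (WB m n)ˣ := Hunit m n i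

lemma validIdx_neg {i : ℕ} (hi : 1 ≤ i) (him : i + 1 ≤ m) : validIdx m n (-(i : ℤ)) :=
  Or.inr ⟨by omega, by omega⟩

lemma validIdx_pos {i : ℕ} (hi : 1 ≤ i) (hin : i + 1 ≤ n) : validIdx m n (i : ℤ) :=
  Or.inl ⟨by omega, by omega⟩

lemma Hunit_zero : Hunit m n 0 = 1 :=
  Hunit_eq_one fun h ↦ by rcases h with h | h <;> omega

lemma commute_Hneg_Hpos (i j : ℕ) : Commute (Hneg m n i) (Hpos m n j) := by
  rcases Nat.eq_zero_or_pos i with rfl | hi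
  · simp [Hneg, Hunit_zero]
  rcases Nat.eq_zero_or_pos j with rfl | hj
  · simp [Hpos, Hunit_zero]
  exact commute_Hunit (by rw [abs_of_neg (by omega)]; omega)

lemma commute_Hneg {i j : ℕ} (hij : i + 2 ≤ j) : Commute (Hneg m n i) (Hneg m n j) :=
  commute_Hunit (by rw [abs_of_pos (by omega)]; omega)

lemma commute_Hpos {i j : ℕ} (hij : i + 2 ≤ j) : Commute (Hpos m n i) (Hpos m n j) :=
  commute_Hunit (by rw [abs_of_neg (by omega)]; omega)

lemma commute_EB_Hneg {i : ℕ} (hi : 2 ≤ i) : Commute (EB m n) (Hneg m n i) :=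
  commute_EB_Hunit (by rw [abs_neg, Nat.abs_cast]; omega)

lemma commute_EB_Hpos {i : ℕ} (hi : 2 ≤ i) : Commute (EB m n) (Hpos m n i) :=
  commute_EB_Hunit (by rw [Nat.abs_cast]; omega)

lemma Hneg_braid {i : ℕ} (hi : 1 ≤ i) (him : i + 2 ≤ m) :
    Hneg m n i * Hneg m n (i + 1) * Hneg m n i
      = Hneg m n (i + 1) * Hneg m n i * Hneg m n (i + 1) := by
  have hshift : -((i + 1 : ℕ) : ℤ) + 1 = -(i : ℤ) := by push_cast; ring
  have h := Hunit_braid (m := m) (n := n) (i := -((i + 1 : ℕ) : ℤ))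
    (validIdx_neg (by omega) (by omega)) (by rw [hshift]; exact validIdx_neg hi (by omega))
  rw [hshift] at h
  exact h.symm

lemma Hpos_braid {i : ℕ} (hi : 1 ≤ i) (hin : i + 2 ≤ n) :
    Hpos m n i * Hpos m n (i + 1) * Hpos m n i
      = Hpos m n (i + 1) * Hpos m n i * Hpos m n (i + 1) := by
  have h := Hunit_braid (m := m) (n := n) (i := (i : ℤ))
    (validIdx_pos hi (by omega)) (by exact_mod_cast validIdx_pos (i := i + 1) (by omega) (by omega))
  exact_mod_cast h

lemma EB_mul_Hneg_one_mul_EB (hm : 2 ≤ m) : EB m n * Hneg m n 1 * EB m n = tv • EB m n :=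
  EB_mul_Hunit_mul_EB (validIdx_neg le_rfl hm) (Or.inr rfl)

lemma EB_mul_Hpos_one_mul_EB (hn : 2 ≤ n) : EB m n * Hpos m n 1 * EB m n = tv • EB m n :=
  EB_mul_Hunit_mul_EB (validIdx_pos le_rfl hn) (Or.inl rfl)

lemma val_Hneg_eq_inv_add {i : ℕ} (hi : 1 ≤ i) (him : i + 1 ≤ m) :
    (Hneg m n i : WB m n) = ((Hneg m n i)⁻¹ : (WB m n)ˣ) + algebraMap KK _ (qv - qv⁻¹) :=
  val_Hunit_eq_inv_add (validIdx_neg hi him)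

lemma val_Hpos_eq_inv_add {i : ℕ} (hi : 1 ≤ i) (hin : i + 1 ≤ n) :
    (Hpos m n i : WB m n) = ((Hpos m n i)⁻¹ : (WB m n)ˣ) + algebraMap KK _ (qv - qv⁻¹) :=
  val_Hunit_eq_inv_add (validIdx_pos hi hin)

lemma rel7 (hm : 2 ≤ m) (hn : 2 ≤ n) :
    EB m n * ((Hneg m n 1)⁻¹ : (WB m n)ˣ) * Hpos m n 1 * EB m n * Hneg m n 1
      = EB m n * ((Hneg m n 1)⁻¹ : (WB m n)ˣ) * Hpos m n 1 * EB m n * Hpos m n 1 := by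
  have hp : validIdx m n 1 := by exact_mod_cast validIdx_pos (m := m) le_rfl hn
  have hm' : validIdx m n (-1) := by exact_mod_cast validIdx_neg (n := n) le_rfl hm
  have hinv : RingQuot.mkAlgHom KK (WBrel m n) (fHinv m n (-1) hm')
      = ((Hneg m n 1)⁻¹ : (WB m n)ˣ) := by
    change _ = Htilinv m n (-((1 : ℕ) : ℤ))
    rw [Nat.cast_one, Htilinv, dif_pos hm', HBinv, fHinv, map_sub, AlgHom.commutes, HB]
  have hneg : (Hneg m n 1 : WB m n) = HB m n (-1) hm' := by
    rw [Hneg, Nat.cast_one, val_Hunit hm']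
  have hpos : (Hpos m n 1 : WB m n) = HB m n 1 hp := by
    rw [Hpos, Nat.cast_one, val_Hunit hp]
  have h := RingQuot.mkAlgHom_rel KK (WBrel.rel7 hp hm')
  simp only [map_mul, hinv] at h
  rw [hneg, hpos, EB]
  exact h

/-! ### The elements `e_k` -/

def crossing (m n i : ℕ) : (WB m n)ˣ := (Hneg m n i)⁻¹ * Hpos m n i

def crossingBar (m n i : ℕ) : (WB m n)ˣ := Hneg m n i * (Hpos m n i)⁻¹

lemma commute_crossing {u : (WB m n)ˣ} {i : ℕ} (hneg : Commute u (Hneg m n i))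
    (hpos : Commute u (Hpos m n i)) : Commute u (crossing m n i) :=
  hneg.inv_right.mul_right hpos

lemma commute_crossingBar {u : (WB m n)ˣ} {i : ℕ} (hneg : Commute u (Hneg m n i))
    (hpos : Commute u (Hpos m n i)) : Commute u (crossingBar m n i) :=
  hneg.mul_right hpos.inv_right

lemma commute_EB_crossing {i : ℕ} (hi : 2 ≤ i) : Commute (EB m n) (crossing m n i) := by
  rw [crossing, Units.val_mul]
  exact (commute_EB_Hneg hi).units_inv_right.mul_right (commute_EB_Hpos hi)

lemma commute_EB_crossingBar {i : ℕ} (hi : 2 ≤ i) : Commute (EB m n) (crossingBar m n i) := by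
  rw [crossingBar, Units.val_mul]
  exact (commute_EB_Hneg hi).mul_right (commute_EB_Hpos hi).units_inv_right

@[simp] lemma ek_zero : ek m n 0 = 1 := rfl

lemma ek_succ (k : ℕ) : ek m n (k + 1) = EB m n * ascProd (crossing m n) 1 k * ek m n k := by
  have hneg : ((List.range k).map fun j ↦ Htilinv m n (-((j + 1 : ℕ) : ℤ))).prod
      = (ascProd (fun i ↦ (Hneg m n i)⁻¹) 1 k : (WB m n)ˣ) := by
    rw [← Units.coeHom_apply, map_ascProd, ascProd_one_eq_prod_range]
    rfl
  have hpos : ((List.range k).map fun j ↦ Htil m n ((j + 1 : ℕ) : ℤ)).prod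
      = (ascProd (Hpos m n) 1 k : (WB m n)ˣ) := by
    rw [← Units.coeHom_apply, map_ascProd, ascProd_one_eq_prod_range]
    rfl
  rw [ek, hneg, hpos, mul_assoc (EB m n), ← Units.val_mul,
    ascProd_mul_ascProd fun i j ↦ (commute_Hneg_Hpos i j).inv_left]
  rfl

lemma commute_ek {u : (WB m n)ˣ} {k : ℕ} (hE : k ≠ 0 → Commute (EB m n) u)
    (hneg : ∀ i < k, Commute u (Hneg m n i)) (hpos : ∀ i < k, Commute u (Hpos m n i)) :
    Commute (u : WB m n) (ek m n k) := by
  induction k with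
  | zero => exact Commute.one_right _
  | succ k ih =>
    rw [ek_succ]
    refine ((hE k.succ_ne_zero).symm.mul_right ?_).mul_right
      (ih (fun _ ↦ hE (by omega)) (fun i hi ↦ hneg i (by omega)) fun i hi ↦ hpos i (by omega))
    exact Commute.units_val (Commute.ascProd_right fun i _ hi ↦
      commute_crossing (hneg i (by omega)) (hpos i (by omega)))

lemma ek_succ_eq_ek_mul (k : ℕ) :
    ek m n (k + 1) = ek m n k * descProd (crossing m n) 1 k * EB m n := by
  induction k with
  | zero => simp [ek_succ]
  | succ k ih =>
    have hc : Commute (crossing m n (1 + k) : WB m n) (ek m n k) :=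
      commute_ek (fun hk ↦ (commute_EB_crossing (by omega)))
        (fun i hi ↦ (commute_crossing (commute_Hneg (by omega)) (commute_Hneg_Hpos i _)).symm)
        fun i hi ↦ (commute_crossing (commute_Hneg_Hpos _ i).symm (commute_Hpos (by omega))).symm
    calc ek m n (k + 1 + 1)
        = EB m n * ascProd (crossing m n) 1 k * crossing m n (1 + k)
            * (ek m n k * descProd (crossing m n) 1 k * EB m n) := by
          rw [ek_succ, ih, ascProd_succ', Units.val_mul]; simp only [mul_assoc]
      _ = EB m n * ascProd (crossing m n) 1 k * ek m n k
            * (crossing m n (1 + k) * descProd (crossing m n) 1 k) * EB m n := by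
          simp only [mul_assoc]
          rw [← mul_assoc _ (ek m n k), hc.eq]
          simp only [mul_assoc]
      _ = ek m n (k + 1) * descProd (crossing m n) 1 (k + 1) * EB m n := by
          rw [ek_succ, descProd_succ, Units.val_mul]

lemma descProd_crossing (a p : ℕ) :
    descProd (crossing m n) a p
      = descProd (fun i ↦ (Hneg m n i)⁻¹) a p * descProd (Hpos m n) a p :=
  (descProd_mul_descProd fun i j ↦ (commute_Hneg_Hpos i j).inv_left).symm

lemma commute_EB_val_ascProd {s : ℕ → (WB m n)ˣ} {a p : ℕ}
    (h : ∀ i, a ≤ i → i < a + p → Commute (EB m n) (s i)) :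
    Commute (EB m n) (ascProd s a p : (WB m n)ˣ) := by
  rw [Units.val_ascProd]
  exact Commute.ascProd_right h

lemma commute_EB_val_descProd {s : ℕ → (WB m n)ˣ} {a p : ℕ}
    (h : ∀ i, a ≤ i → i < a + p → Commute (EB m n) (s i)) :
    Commute (EB m n) (descProd s a p : (WB m n)ˣ) := by
  rw [Units.val_descProd]
  exact Commute.descProd_right h

lemma semiconjBy_descProd_Hpos {p i : ℕ} (hi : 1 ≤ i) (hip : i ≤ p) (hpn : p + 2 ≤ n) :
    SemiconjBy (descProd (Hpos m n) 1 (p + 1)) (Hpos m n (i + 1)) (Hpos m n i) :=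
  semiconjBy_descProd_of_braid (fun _ _ ↦ commute_Hpos)
    (fun j hj hjp ↦ Hpos_braid hj (by omega)) hi (by omega)

lemma semiconjBy_ascProd_Hneg {p i : ℕ} (hi : 1 ≤ i) (hip : i ≤ p) (hpm : p + 2 ≤ m) :
    SemiconjBy (ascProd (Hneg m n) 1 (p + 1)) (Hneg m n i) (Hneg m n (i + 1)) :=
  semiconjBy_ascProd_of_braid (fun _ _ ↦ commute_Hneg)
    (fun j hj hjp ↦ Hneg_braid hj (by omega)) hi (by omega)

lemma semiconjBy_descProd_crossing {k i : ℕ} (hi : 1 ≤ i) (hik : i < k) (hkm : k + 1 ≤ m)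
    (hkn : k + 1 ≤ n) :
    SemiconjBy (descProd (crossing m n) 1 k) (Hneg m n (i + 1)) (Hneg m n i) ∧
      SemiconjBy (descProd (crossing m n) 1 k) (Hpos m n (i + 1)) (Hpos m n i) := by
  obtain ⟨p, rfl⟩ : ∃ p, k = p + 1 := ⟨k - 1, by omega⟩
  have hneg : SemiconjBy (descProd (fun i ↦ (Hneg m n i)⁻¹) 1 (p + 1))
      (Hneg m n (i + 1)) (Hneg m n i) := by
    rw [← Pi.inv_def, ← ascProd_inv]
    exact (semiconjBy_ascProd_Hneg hi (by omega) (by omega)).inv_symm_left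
  rw [descProd_crossing]
  exact ⟨hneg.mul_left (Commute.descProd_right fun j _ _ ↦ (commute_Hneg_Hpos _ j)).symm,
    SemiconjBy.mul_left
      (Commute.descProd_right fun j _ _ ↦ (commute_Hneg_Hpos j i).inv_left.symm).symm
      (semiconjBy_descProd_Hpos hi (by omega) (by omega))⟩

lemma ek_mul_Hneg {k i : ℕ} (hkm : k ≤ m) (hkn : k ≤ n) (hi : 1 ≤ i) (hik : i < k) :
    ek m n k * Hneg m n i = ek m n k * Hpos m n i := by
  induction k generalizing i with
  | zero => omega
  | succ k ih =>
    rw [ek_succ_eq_ek_mul]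
    rcases Nat.lt_or_ge 1 i with hi2 | hi1
    · obtain ⟨j, rfl⟩ : ∃ j, i = j + 1 := ⟨i - 1, by omega⟩
      have hD := semiconjBy_descProd_crossing (m := m) (n := n) (show 1 ≤ j by omega)
        (show j < k by omega) (by omega) (by omega)
      have step : ∀ u v : (WB m n)ˣ, SemiconjBy (descProd (crossing m n) 1 k) u v →
          Commute (EB m n) u → ek m n k * descProd (crossing m n) 1 k * EB m n * u
            = ek m n k * v * descProd (crossing m n) 1 k * EB m n := by
        intro u v huv hEu
        rw [mul_assoc _ (EB m n), hEu.eq, ← mul_assoc, mul_assoc (ek m n k), ← Units.val_mul,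
          huv.eq, Units.val_mul, ← mul_assoc]
      rw [step _ _ hD.1 (commute_EB_Hneg (by omega)), step _ _ hD.2 (commute_EB_Hpos (by omega)),
        ih (by omega) (by omega) (by omega) (by omega)]
    · obtain rfl : i = 1 := by omega
      obtain ⟨k, rfl⟩ : ∃ k', k = k' + 1 := ⟨k - 1, by omega⟩
      have hW : Commute (EB m n) (descProd (crossing m n) 2 k : (WB m n)ˣ) :=
        commute_EB_val_descProd fun i hi _ ↦ commute_EB_crossing hi
      have hsplit : ((descProd (crossing m n) 1 (k + 1) : (WB m n)ˣ) : WB m n)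
          = (descProd (crossing m n) 2 k : (WB m n)ˣ) * ((Hneg m n 1)⁻¹ : (WB m n)ˣ)
            * Hpos m n 1 := by
        rw [descProd_succ', Units.val_mul, crossing, Units.val_mul, mul_assoc]
      have key : ∀ u : WB m n,
          ek m n (k + 1) * (descProd (crossing m n) 1 (k + 1) : (WB m n)ˣ) * EB m n * u
            = ek m n k * (descProd (crossing m n) 1 k : (WB m n)ˣ)
              * (descProd (crossing m n) 2 k : (WB m n)ˣ)
              * (EB m n * ((Hneg m n 1)⁻¹ : (WB m n)ˣ) * Hpos m n 1 * EB m n * u) := by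
        intro u
        rw [ek_succ_eq_ek_mul k, hsplit]
        simp only [← mul_assoc]
        rw [mul_assoc (ek m n k * _) (EB m n), hW.eq, ← mul_assoc]
      rw [key, key, rel7 (by omega) (by omega)]

lemma ek_mul_Hneg_inv {k i : ℕ} (hkm : k ≤ m) (hkn : k ≤ n) (hi : 1 ≤ i) (hik : i < k) :
    ek m n k * ((Hneg m n i)⁻¹ : (WB m n)ˣ) = ek m n k * ((Hpos m n i)⁻¹ : (WB m n)ˣ) := by
  have h := ek_mul_Hneg hkm hkn hi hik
  rw [val_Hneg_eq_inv_add hi (by omega), val_Hpos_eq_inv_add hi (by omega), mul_add,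
    mul_add] at h
  exact eq_of_add_right_eq h

lemma ek_succ_mul_mul_EB_mul {p : ℕ} {u v : (WB m n)ˣ} {x : WB m n} (huv : u * v = 1)
    (hu : Commute (EB m n) u) (hx : EB m n * x * EB m n = tv • EB m n) :
    ek m n (p + 1) * u * x * EB m n * v = tv • ek m n (p + 1) := by
  have hEu : ∀ z, EB m n * (u * z) = u * (EB m n * z) := fun z ↦ by
    rw [← mul_assoc, hu.eq, mul_assoc]
  calc ek m n (p + 1) * u * x * EB m n * v
      = ek m n p * descProd (crossing m n) 1 p * u * (EB m n * x * EB m n) * v := by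
        rw [ek_succ_eq_ek_mul]
        simp only [mul_assoc]
        rw [hEu]
    _ = tv • (ek m n p * descProd (crossing m n) 1 p * EB m n * (u * v : (WB m n)ˣ)) := by
        rw [hx, mul_smul_comm, smul_mul_assoc, Units.val_mul]
        simp only [mul_assoc]
        rw [hEu]
    _ = tv • ek m n (p + 1) := by rw [huv, Units.val_one, mul_one, ek_succ_eq_ek_mul]

lemma ek_mul_Hpos_mul_descProd_crossing_mul_EB {p : ℕ} (hm : p + 2 ≤ m) (hn : p + 2 ≤ n) :
    ek m n (p + 1) * Hpos m n (p + 1) * descProd (crossing m n) 1 p * EB m n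
      = tv • ek m n (p + 1) := by
  have hG : Hpos m n (p + 1) * descProd (crossing m n) 1 p
      = descProd (fun i ↦ (Hneg m n i)⁻¹) 1 p * descProd (Hpos m n) 1 (p + 1) := by
    have hc : Commute (Hpos m n (p + 1)) (descProd (fun i ↦ (Hneg m n i)⁻¹) 1 p) :=
      Commute.descProd_right fun i _ _ ↦ (commute_Hneg_Hpos i _).inv_left.symm
    rw [descProd_crossing, ← mul_assoc, hc.eq, mul_assoc, descProd_succ _ 1 p, Nat.add_comm 1 p]
  have hGA : ek m n (p + 1) * (descProd (fun i ↦ (Hneg m n i)⁻¹) 1 p : (WB m n)ˣ)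
      = ek m n (p + 1) * (ascProd (fun i ↦ (Hpos m n i)⁻¹) 1 p : (WB m n)ˣ) := by
    rw [Units.val_descProd, Units.val_ascProd]
    exact mul_descProd_eq_mul_ascProd
      (fun i hi hip ↦ ek_mul_Hneg_inv (by omega) (by omega) hi (by omega))
      (fun i j ↦ (commute_Hneg_Hpos i j).inv_inv.units_val)
  have hAX : SemiconjBy (descProd (Hpos m n) 1 (p + 1))
      (ascProd (fun i ↦ (Hpos m n i)⁻¹) 2 p) (ascProd (fun i ↦ (Hpos m n i)⁻¹) 1 p) := by
    rw [ascProd_add_one]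
    exact SemiconjBy.ascProd_right fun i hi hip ↦
      (semiconjBy_descProd_Hpos hi (by omega) hn).inv_right
  have hX : descProd (Hpos m n) 1 (p + 1) = descProd (Hpos m n) 2 p * Hpos m n 1 :=
    descProd_succ' _ 1 p
  have hXA : descProd (Hpos m n) 2 p * ascProd (fun i ↦ (Hpos m n i)⁻¹) 2 p = 1 :=
    descProd_mul_ascProd_inv (Hpos m n) 2 p
  set A := ascProd (fun i ↦ (Hpos m n i)⁻¹) 1 p
  set A₂ := ascProd (fun i ↦ (Hpos m n i)⁻¹) 2 p
  set X := descProd (Hpos m n) 1 (p + 1)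
  set X₂ := descProd (Hpos m n) 2 p
  have hEA : Commute (EB m n) A₂ :=
    commute_EB_val_ascProd fun i hi _ ↦ (commute_EB_Hpos hi).units_inv_right
  calc ek m n (p + 1) * Hpos m n (p + 1) * descProd (crossing m n) 1 p * EB m n
      = ek m n (p + 1) * X₂ * Hpos m n 1 * EB m n * A₂ := by
        rw [mul_assoc (ek m n (p + 1)), ← Units.val_mul, hG, Units.val_mul, ← mul_assoc, hGA,
          mul_assoc (ek m n (p + 1)), ← Units.val_mul, ← hAX.eq, Units.val_mul, ← mul_assoc,
          mul_assoc _ (A₂ : WB m n), ← hEA.eq, hX, Units.val_mul]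
        simp only [mul_assoc]
    _ = tv • ek m n (p + 1) :=
        ek_succ_mul_mul_EB_mul hXA (commute_EB_val_descProd fun i hi _ ↦ commute_EB_Hpos hi)
          (EB_mul_Hpos_one_mul_EB (by omega))

lemma ek_mul_Hneg_mul_descProd_crossing_mul_EB {p : ℕ} (hm : p + 2 ≤ m) (hn : p + 2 ≤ n) :
    ek m n (p + 1) * Hneg m n (p + 1) * descProd (crossing m n) 1 p * EB m n
      = tv • ek m n (p + 1) := by
  have hG : Hneg m n (p + 1) * descProd (crossing m n) 1 p
      = descProd (Hpos m n) 1 p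
        * (Hneg m n (p + 1) * descProd (fun i ↦ (Hneg m n i)⁻¹) 1 p) := by
    have hc : Commute (Hneg m n (p + 1)) (descProd (Hpos m n) 1 p) :=
      Commute.descProd_right fun i _ _ ↦ commute_Hneg_Hpos _ i
    have hc' : Commute (descProd (fun i ↦ (Hneg m n i)⁻¹) 1 p) (descProd (Hpos m n) 1 p) :=
      Commute.descProd_right fun i _ _ ↦
        (Commute.descProd_right fun j _ _ ↦ (commute_Hneg_Hpos j i).inv_left.symm).symm
    rw [descProd_crossing, hc'.eq, ← mul_assoc, hc.eq, mul_assoc]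
  have hXY : ek m n (p + 1) * (descProd (Hpos m n) 1 p : (WB m n)ˣ)
      = ek m n (p + 1) * (ascProd (Hneg m n) 1 p : (WB m n)ˣ) := by
    rw [Units.val_descProd, Units.val_ascProd]
    exact mul_descProd_eq_mul_ascProd
      (fun i hi hip ↦ (ek_mul_Hneg (by omega) (by omega) hi (by omega)).symm)
      (fun i j ↦ (commute_Hneg_Hpos j i).symm.units_val)
  have hY : ascProd (Hneg m n) 1 p * Hneg m n (p + 1) = ascProd (Hneg m n) 1 (p + 1) := by
    rw [ascProd_succ', Nat.add_comm 1 p]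
  have hYG : SemiconjBy (ascProd (Hneg m n) 1 (p + 1)) (descProd (fun i ↦ (Hneg m n i)⁻¹) 1 p)
      (descProd (fun i ↦ (Hneg m n i)⁻¹) 2 p) := by
    rw [descProd_add_one _ 1 p]
    exact SemiconjBy.descProd_right fun i hi hip ↦
      (semiconjBy_ascProd_Hneg hi (by omega) hm).inv_right
  have hGY : descProd (fun i ↦ (Hneg m n i)⁻¹) 2 p * ascProd (Hneg m n) 2 p = 1 :=
    descProd_inv_mul_ascProd (Hneg m n) 2 p
  set G₂ := descProd (fun i ↦ (Hneg m n i)⁻¹) 2 p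
  set Y₂ := ascProd (Hneg m n) 2 p
  have hEY : Commute (EB m n) Y₂ := commute_EB_val_ascProd fun i hi _ ↦ commute_EB_Hneg hi
  calc ek m n (p + 1) * Hneg m n (p + 1) * descProd (crossing m n) 1 p * EB m n
      = ek m n (p + 1) * G₂ * Hneg m n 1 * EB m n * Y₂ := by
        rw [mul_assoc (ek m n (p + 1)), ← Units.val_mul, hG, Units.val_mul, ← mul_assoc, hXY,
          mul_assoc (ek m n (p + 1)), ← Units.val_mul, ← mul_assoc, hY, hYG.eq, ascProd_succ]
        simp only [Units.val_mul, mul_assoc]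
        rw [← hEY.eq]
    _ = tv • ek m n (p + 1) :=
        ek_succ_mul_mul_EB_mul hGY
          (commute_EB_val_descProd fun i hi _ ↦ (commute_EB_Hneg hi).units_inv_right)
          (EB_mul_Hneg_one_mul_EB (by omega))

lemma val_crossingBar_add {j : ℕ} (hj : 1 ≤ j) (hjm : j + 1 ≤ m) (hjn : j + 1 ≤ n) :
    (crossingBar m n j : WB m n) + algebraMap KK _ (qv - qv⁻¹) * Hneg m n j
      = crossing m n j + algebraMap KK _ (qv - qv⁻¹) * Hpos m n j := by
  have hbar : (Hneg m n j : WB m n) * Hpos m n j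
      = crossingBar m n j + algebraMap KK _ (qv - qv⁻¹) * Hneg m n j := by
    rw [crossingBar, Units.val_mul, val_Hpos_eq_inv_add hj hjn, mul_add, Algebra.commutes]
  have hcross : (Hneg m n j : WB m n) * Hpos m n j
      = crossing m n j + algebraMap KK _ (qv - qv⁻¹) * Hpos m n j := by
    rw [crossing, Units.val_mul, val_Hneg_eq_inv_add hj hjm, add_mul]
  rw [← hbar, hcross]

lemma ek_mul_crossingBar_mul_descProd_crossing_mul_EB {p : ℕ} (hm : p + 2 ≤ m)
    (hn : p + 2 ≤ n) :
    ek m n (p + 1) * crossingBar m n (p + 1) * descProd (crossing m n) 1 p * EB m n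
      = ek m n (p + 2) := by
  set d := algebraMap KK (WB m n) (qv - qv⁻¹)
  set D := descProd (crossing m n) 1 p
  have hsplit : ∀ u v : WB m n, ek m n (p + 1) * (u + d * v) * D * EB m n
      = ek m n (p + 1) * u * D * EB m n + d * (ek m n (p + 1) * v * D * EB m n) := by
    intro u v
    rw [mul_add, Algebra.left_comm, add_mul, add_mul]
    simp only [mul_assoc]
    rfl
  refine eq_of_add_right_eq (z := d * (tv • ek m n (p + 1))) ?_
  calc ek m n (p + 1) * crossingBar m n (p + 1) * D * EB m n + d * (tv • ek m n (p + 1))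
      = ek m n (p + 1) * (crossingBar m n (p + 1) + d * Hneg m n (p + 1)) * D * EB m n := by
        rw [hsplit, ek_mul_Hneg_mul_descProd_crossing_mul_EB hm hn]
    _ = ek m n (p + 1) * (crossing m n (p + 1) + d * Hpos m n (p + 1)) * D * EB m n := by
        rw [val_crossingBar_add (by omega) (by omega) (by omega)]
    _ = ek m n (p + 2) + d * (tv • ek m n (p + 1)) := by
        rw [hsplit, ek_mul_Hpos_mul_descProd_crossing_mul_EB hm hn, ek_succ_eq_ek_mul (p + 1),
          descProd_succ, Units.val_mul, ← mul_assoc, Nat.add_comm 1 p]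

lemma EB_mul_ascProd_crossingBar_mul_ek {k : ℕ} (hkm : k + 1 ≤ m) (hkn : k + 1 ≤ n) :
    EB m n * ascProd (crossingBar m n) 1 k * ek m n k = ek m n (k + 1) := by
  induction k with
  | zero => simp [ek_succ]
  | succ k ih =>
    have hc : Commute (crossingBar m n (k + 1) : WB m n) (ek m n k) :=
      commute_ek (fun _ ↦ commute_EB_crossingBar (by omega))
        (fun i hi ↦ (commute_crossingBar (commute_Hneg (by omega)) (commute_Hneg_Hpos i _)).symm)
        fun i hi ↦
          (commute_crossingBar (commute_Hneg_Hpos _ i).symm (commute_Hpos (by omega))).symm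
    calc EB m n * ascProd (crossingBar m n) 1 (k + 1) * ek m n (k + 1)
        = EB m n * ascProd (crossingBar m n) 1 k * ek m n k * crossingBar m n (k + 1)
            * descProd (crossing m n) 1 k * EB m n := by
          rw [ascProd_succ', Units.val_mul, ek_succ_eq_ek_mul, Nat.add_comm 1 k]
          simp only [mul_assoc]
          rw [← mul_assoc _ (ek m n k), hc.eq]
          simp only [mul_assoc]
      _ = ek m n (k + 1 + 1) := by
          rw [ih (by omega) (by omega)]
          exact ek_mul_crossingBar_mul_descProd_crossing_mul_EB hkm hkn

lemma units_map_crossing {f : WB m n →+* WB m n}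
    (hfH : ∀ (i : ℤ) (h : validIdx m n i), f (HB m n i h) = HBinv m n i h) (i : ℕ) :
    Units.map (f : WB m n →* WB m n) (crossing m n i) = crossingBar m n i := by
  have hH : ∀ j, Units.map (f : WB m n →* WB m n) (Hunit m n j) = (Hunit m n j)⁻¹ := by
    intro j
    ext
    change f (Htil m n j) = Htilinv m n j
    unfold Htil Htilinv
    split_ifs with hv
    exacts [hfH j hv, map_one f]
  simp [crossing, crossingBar, Hneg, Hpos, hH]

end WB

theorem bar_fixes_ek_general (m n : ℕ)
    (f : WB m n →+* WB m n)
    (hfH : ∀ (i : ℤ) (h : validIdx m n i), f (HB m n i h) = HBinv m n i h)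
    (hfE : f (EB m n) = EB m n)
    (k : ℕ) (hk : k ≤ min m n) :
    f (ek m n k) = ek m n k := by
  induction k with
  | zero => exact map_one f
  | succ k ih =>
    have hC : f (ascProd (WB.crossing m n) 1 k : (WB m n)ˣ)
        = (ascProd (WB.crossingBar m n) 1 k : (WB m n)ˣ) := by
      change (Units.map (f : WB m n →* WB m n) _ : WB m n) = _
      rw [map_ascProd]
      simp only [WB.units_map_crossing hfH]
    calc f (ek m n (k + 1))
        = EB m n * (ascProd (WB.crossingBar m n) 1 k : (WB m n)ˣ) * ek m n k := by
          rw [WB.ek_succ, map_mul, map_mul, hfE, ih (by omega), hC]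
      _ = ek m n (k + 1) := WB.EB_mul_ascProd_crossingBar_mul_ek (by omega) (by omega)

/-- The elements `e_k` (for `0 ≤ k ≤ min{m,n}`) are invariant under the bar involution,
i.e. under any ring homomorphism semilinear with respect to the field involution
`q ↦ q⁻¹`, `t ↦ t⁻¹` that sends each `H i` to `H i⁻¹` and fixes `e`. -/
theorem bar_fixes_ek (m n : ℕ) (hm : 1 ≤ m) (hn : 1 ≤ n)
    (σ : KK →+* KK) (hσq : σ qv = qv⁻¹) (hσt : σ tv = tv⁻¹)
    (f : WB m n →+* WB m n)
    (hf : ∀ c : KK, f (algebraMap KK (WB m n) c) = algebraMap KK (WB m n) (σ c))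
    (hfH : ∀ (i : ℤ) (h : validIdx m n i), f (HB m n i h) = HBinv m n i h)
    (hfE : f (EB m n) = EB m n)
    (k : ℕ) (hk : k ≤ min m n) :
    f (ek m n k) = ek m n k :=
  bar_fixes_ek_general m n f hfH hfE k hk

end
end

section
/- In B_{m,n}(q,t) with m, n ≥ 2, one has e H_{-1} H_1⁻¹ e = e H_{-1}⁻¹ H_1 e; equivalently, the element e_2 = e H_{-1}⁻¹ H_1 e is fixed by the bar involution. -/
open scoped Classical

noncomputable section

/-- For `m, n ≥ 2`, one has `e H_{-1} H_1⁻¹ e = e H_{-1}⁻¹ H_1 e`; equivalently,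
`e_2 = e H_{-1}⁻¹ H_1 e` is fixed by the bar involution (any ring homomorphism
semilinear with respect to `q ↦ q⁻¹`, `t ↦ t⁻¹` with `H i ↦ H i⁻¹`, `e ↦ e`). -/
theorem e2_bar_invariant (m n : ℕ) (hm : 2 ≤ m) (hn : 2 ≤ n)
    (σ : KK →+* KK) (hσq : σ qv = qv⁻¹) (hσt : σ tv = tv⁻¹)
    (f : WB m n →+* WB m n)
    (hf : ∀ c : KK, f (algebraMap KK (WB m n) c) = algebraMap KK (WB m n) (σ c))
    (hfH : ∀ (i : ℤ) (h : validIdx m n i), f (HB m n i h) = HBinv m n i h)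
    (hfE : f (EB m n) = EB m n) :
    EB m n * Htil m n (-1) * Htilinv m n 1 * EB m n =
      EB m n * Htilinv m n (-1) * Htil m n 1 * EB m n ∧
    f (EB m n * Htilinv m n (-1) * Htil m n 1 * EB m n) =
      EB m n * Htilinv m n (-1) * Htil m n 1 * EB m n := by
  have h1 : validIdx m n 1 := Or.inl ⟨le_refl 1, by omega⟩
  have hm1 : validIdx m n (-1) := Or.inr ⟨by norm_num, by omega⟩
  set E := EB m n with hE
  set A := HB m n (-1) hm1 with hA
  set B := HB m n 1 h1 with hB
  set c : WB m n := algebraMap KK (WB m n) (qv - qv⁻¹) with hc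
  have hT1 : Htil m n 1 = B := dif_pos h1
  have hTm : Htil m n (-1) = A := dif_pos hm1
  have hTi1 : Htilinv m n 1 = B - c := dif_pos h1
  have hTim : Htilinv m n (-1) = A - c := dif_pos hm1
  rw [hT1, hTm, hTi1, hTim]
  -- the relations e H_{±1} e = t e
  have relB : E * B * E = algebraMap KK (WB m n) tv * E := by
    have h := RingQuot.mkAlgHom_rel KK (WBrel.eHe (m := m) (n := n) 1 h1 (Or.inl rfl))
    simpa [EB, HB, fE, fH, map_mul, AlgHom.commutes, hE, hB] using h
  have relA : E * A * E = algebraMap KK (WB m n) tv * E := by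
    have h := RingQuot.mkAlgHom_rel KK (WBrel.eHe (m := m) (n := n) (-1) hm1 (Or.inr rfl))
    simpa [EB, HB, fE, fH, map_mul, AlgHom.commutes, hE, hA] using h
  have commA : E * A * c * E = c * (E * A * E) := by
    have h1' : E * A * c = c * (E * A) := (Algebra.commutes (qv - qv⁻¹) (E * A)).symm
    calc E * A * c * E = (c * (E * A)) * E := congrArg (· * E) h1'
      _ = c * (E * A * E) := mul_assoc c (E * A) E
  have commB : E * c * B * E = c * (E * B * E) := by
    have h1' : E * c = c * E := (Algebra.commutes (qv - qv⁻¹) E).symm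
    calc E * c * B * E = ((c * E) * B) * E := congrArg (fun x => (x * B) * E) h1'
      _ = (c * (E * B)) * E := congrArg (· * E) (mul_assoc c E B)
      _ = c * (E * B * E) := mul_assoc c (E * B) E
  have expandL : E * A * (B - c) * E = E * A * B * E - c * (E * A * E) := by
    calc E * A * (B - c) * E
        = (E * A * B - E * A * c) * E := congrArg (· * E) (mul_sub (E * A) B c)
      _ = E * A * B * E - E * A * c * E := sub_mul (E * A * B) (E * A * c) E
      _ = E * A * B * E - c * (E * A * E) := by rw [commA]
  have expandR : E * (A - c) * B * E = E * A * B * E - c * (E * B * E) := by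
    calc E * (A - c) * B * E
        = ((E * A - E * c) * B) * E := congrArg (fun x => (x * B) * E) (mul_sub E A c)
      _ = (E * A * B - E * c * B) * E := congrArg (· * E) (sub_mul (E * A) (E * c) B)
      _ = E * A * B * E - E * c * B * E := sub_mul (E * A * B) (E * c * B) E
      _ = E * A * B * E - c * (E * B * E) := by rw [commB]
  have part1 : E * A * (B - c) * E = E * (A - c) * B * E := by
    rw [expandL, expandR, relA, relB]
  refine ⟨part1, ?_⟩
  -- compute f of the scalar c
  have hσinv : σ qv⁻¹ = qv := by
    have h3 : σ qv⁻¹ = (σ qv)⁻¹ := map_inv₀ σ qv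
    rw [hσq] at h3
    exact h3.trans (inv_inv qv)
  have hσc : σ (qv - qv⁻¹) = qv⁻¹ - qv := by
    have h4 : σ (qv - qv⁻¹) = σ qv - σ qv⁻¹ := map_sub σ qv qv⁻¹
    rw [hσq, hσinv] at h4
    exact h4
  have hfc : f c = -c := by
    calc f c = algebraMap KK (WB m n) (σ (qv - qv⁻¹)) := hf (qv - qv⁻¹)
      _ = algebraMap KK (WB m n) (qv⁻¹ - qv) := congrArg _ hσc
      _ = algebraMap KK (WB m n) (-(qv - qv⁻¹)) := congrArg _ (neg_sub qv qv⁻¹).symm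
      _ = -c := map_neg (algebraMap KK (WB m n)) (qv - qv⁻¹)
  have hAinv : HBinv m n (-1) hm1 = A - c := rfl
  have hBinv : HBinv m n 1 h1 = B - c := rfl
  have hfA : f A = A - c := by rw [hA, hfH (-1) hm1, hAinv]
  have hfBB : f B = B - c := by rw [hB, hfH 1 h1, hBinv]
  have hfAc : f (A - c) = A := by
    calc f (A - c) = f A - f c := map_sub f A c
      _ = (A - c) - (-c) := by rw [hfA, hfc]
      _ = (A - c) + c := sub_neg_eq_add (A - c) c
      _ = A := sub_add_cancel A c
  calc f (E * (A - c) * B * E)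
      = f (E * (A - c) * B) * f E := map_mul f (E * (A - c) * B) E
    _ = (f (E * (A - c)) * f B) * f E :=
        congrArg (· * f E) (map_mul f (E * (A - c)) B)
    _ = ((f E * f (A - c)) * f B) * f E :=
        congrArg (fun x => (x * f B) * f E) (map_mul f E (A - c))
    _ = E * A * (B - c) * E := by rw [hfE, hfAc, hfBB]
    _ = E * (A - c) * B * E := part1

end
end

section
/- In B_{m,n}(q,t), for all integers i, k with 1 ≤ i, i + 1 ≤ k ≤ min{m,n}, and such that the generator H_{-(i+1)} exists (i.e. i + 1 ≤ m − 1), one has e_i H_{-i} H_{-(i+1)} H_{-i} e_k = t · ((t − t⁻¹)/(q − q⁻¹))^{i−1} · (1 + (q − q⁻¹) H_{-(i+1)}) e_k. -/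
open scoped Classical

noncomputable section

-- ## Part A: scalars, generic monoid/ring lemmas, relation layer

lemma qv_ne_zero : qv ≠ 0 := by
  intro h
  exact MvPolynomial.X_ne_zero (0 : Fin 2)
    (IsFractionRing.injective (MvPolynomial (Fin 2) ℚ) KK (by simpa [qv] using h))

lemma qv_mul_inv : qv * qv⁻¹ = 1 := mul_inv_cancel₀ qv_ne_zero

section Generic
variable {M : Type*} [Monoid M] {a b ai bi : M}

/-- `b a⁻¹ b⁻¹ = a⁻¹ b⁻¹ a` from the braid relation. -/
lemma braid_conj₁ (hai : ai * a = 1) (ha : a * ai = 1) (hbi : bi * b = 1) (hb : b * bi = 1)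
    (hbr : b * a * b = a * b * a) : b * ai * bi = ai * (bi * a) := by
  have hab : a * b = bi * (a * b * a) := by
    rw [← hbr]; rw [show b * a * b = b * (a * b) from by rw [mul_assoc], ← mul_assoc, hbi, one_mul]
  calc b * ai * bi = ai * (a * (b * ai * bi)) := by
        rw [← mul_assoc, ← mul_assoc, hai, one_mul]
    _ = ai * ((a * b) * ai * bi) := by simp only [mul_assoc]
    _ = ai * ((bi * (a * b * a)) * ai * bi) := by rw [← hab]
    _ = ai * (bi * a) := by
        rw [show bi * (a * b * a) * ai * bi = bi * (a * (b * ((a * ai) * bi))) from by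
            simp only [mul_assoc], ha, one_mul, ← mul_assoc, hb, mul_one, mul_assoc]

/-- `a⁻¹ b a = b a b⁻¹` from the braid relation. -/
lemma braid_conj₂ (hai : ai * a = 1) (hb : b * bi = 1)
    (hbr : b * a * b = a * b * a) : ai * b * a = b * (a * bi) := by
  calc ai * b * a = ai * (b * a * b) * bi := by
        rw [show ai * (b * a * b) * bi = ai * (b * (a * (b * bi))) from by simp only [mul_assoc],
          hb, mul_one, ← mul_assoc]
    _ = ai * (a * b * a) * bi := by rw [hbr]
    _ = b * (a * bi) := by
        rw [show ai * (a * b * a) * bi = ai * a * (b * (a * bi)) from by simp only [mul_assoc],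
          hai, one_mul]

end Generic

section GenericRing
variable {A : Type*} [Ring A]

lemma quad_aux₁ (H a b : A) (hca : H * a = a * H) (hcb : H * b = b * H)
    (h0 : (H - a) * (H + b) = 0) (hone : a * b = 1) : H * (H - (a - b)) = 1 := by
  have e1 : H * H + b * H - a * H = 1 := by
    have : (H - a) * (H + b) = H * H + b * H - a * H - 1 := by
      rw [sub_mul, mul_add, mul_add, hcb, ← hone]; abel
    rw [this] at h0
    exact sub_eq_zero.mp h0
  rw [← e1, mul_sub, mul_sub, hca, hcb]; abel

lemma quad_aux₂ (H a b : A) (hca : H * a = a * H) (hcb : H * b = b * H)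
    (h0 : (H - a) * (H + b) = 0) (hone : a * b = 1) : (H - (a - b)) * H = 1 := by
  have e1 : H * H + b * H - a * H = 1 := by
    have : (H - a) * (H + b) = H * H + b * H - a * H - 1 := by
      rw [sub_mul, mul_add, mul_add, hcb, ← hone]; abel
    rw [this] at h0
    exact sub_eq_zero.mp h0
  rw [← e1, sub_mul, sub_mul]; abel

lemma conj_sub_aux (x y z w : A) (h : x * y = y * z) (hc : w * y = y * w) :
    (x - w) * y = y * (z - w) := by
  rw [sub_mul, mul_sub, h, hc]

end GenericRing

section Rels
variable (m n : ℕ)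

/-- shorthand for scalars in `WB m n` -/
abbrev sc (x : KK) : WB m n := algebraMap KK (WB m n) x

lemma Wsub_add_cancel (x y : WB m n) : x - y + y = x := sub_add_cancel x y

lemma sc_commute (x : KK) (a : WB m n) : Commute (sc m n x) a :=
  (Algebra.commutes x a)

lemma Htil_valid {i : ℤ} (h : validIdx m n i) : Htil m n i = HB m n i h := dif_pos h

lemma Htilinv_valid {i : ℤ} (h : validIdx m n i) : Htilinv m n i = HBinv m n i h := dif_pos h

lemma Htilinv_eq {i : ℤ} (h : validIdx m n i) :
    Htilinv m n i = Htil m n i - sc m n (qv - qv⁻¹) := by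
  rw [Htilinv_valid m n h, Htil_valid m n h]; rfl

lemma Htil_eq_inv_add {i : ℤ} (h : validIdx m n i) :
    Htil m n i = Htilinv m n i + sc m n (qv - qv⁻¹) := by
  rw [Htilinv_eq m n h, Wsub_add_cancel]

lemma mk_fH {i : ℤ} (h : validIdx m n i) :
    RingQuot.mkAlgHom KK (WBrel m n) (fH m n i h) = Htil m n i := (Htil_valid m n h).symm

lemma mk_fHinv {i : ℤ} (h : validIdx m n i) :
    RingQuot.mkAlgHom KK (WBrel m n) (fHinv m n i h) = Htilinv m n i := by
  rw [Htilinv_valid m n h]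
  simp only [fHinv, map_sub, AlgHom.commutes, HBinv, mk_fH, Htil_valid m n h]

lemma sc_split : sc m n (qv - qv⁻¹) = sc m n qv - sc m n qv⁻¹ :=
  map_sub (algebraMap KK (WB m n)) qv qv⁻¹

lemma quad_t {i : ℤ} (h : validIdx m n i) :
    Htil m n i * Htilinv m n i = 1 := by
  have h0 : (Htil m n i - sc m n qv) * (Htil m n i + sc m n qv⁻¹) = 0 := by
    have := RingQuot.mkAlgHom_rel KK (WBrel.quad i h)
    simpa only [map_mul, map_sub, map_add, map_zero, AlgHom.commutes, mk_fH m n h] using this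
  rw [Htilinv_eq m n h, sc_split]
  exact quad_aux₁ (Htil m n i) (sc m n qv) (sc m n qv⁻¹)
    ((sc_commute m n qv _).eq.symm) ((sc_commute m n qv⁻¹ _).eq.symm) h0
    (by rw [← map_mul, qv_mul_inv, map_one])

lemma quad_t' {i : ℤ} (h : validIdx m n i) :
    Htilinv m n i * Htil m n i = 1 := by
  have h0 : (Htil m n i - sc m n qv) * (Htil m n i + sc m n qv⁻¹) = 0 := by
    have := RingQuot.mkAlgHom_rel KK (WBrel.quad i h)
    simpa only [map_mul, map_sub, map_add, map_zero, AlgHom.commutes, mk_fH m n h] using this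
  rw [Htilinv_eq m n h, sc_split]
  exact quad_aux₂ (Htil m n i) (sc m n qv) (sc m n qv⁻¹)
    ((sc_commute m n qv _).eq.symm) ((sc_commute m n qv⁻¹ _).eq.symm) h0
    (by rw [← map_mul, qv_mul_inv, map_one])

end Rels

-- ## Part B: more relations, Commute layer

section RelsB
variable (m n : ℕ)

lemma Htil_invalid {i : ℤ} (h : ¬ validIdx m n i) : Htil m n i = 1 := dif_neg h
lemma Htilinv_invalid {i : ℤ} (h : ¬ validIdx m n i) : Htilinv m n i = 1 := dif_neg h

/-- commuting generators, no validity needed -/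
lemma Hcomm (i j : ℤ) (hij : 1 < |i - j|) : Commute (Htil m n i) (Htil m n j) := by
  by_cases hi : validIdx m n i
  · by_cases hj : validIdx m n j
    · have := RingQuot.mkAlgHom_rel KK (WBrel.comm i hi j hj hij)
      simp only [map_mul, mk_fH m n hi, mk_fH m n hj] at this
      exact this
    · rw [Htil_invalid m n hj]; exact Commute.one_right _
  · rw [Htil_invalid m n hi]; exact Commute.one_left _

lemma HcommE (i : ℤ) (h2 : 2 ≤ |i|) : Commute (Htil m n i) (EB m n) := by
  by_cases hi : validIdx m n i
  · have := RingQuot.mkAlgHom_rel KK (WBrel.commE i hi h2)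
    simp only [map_mul, mk_fH m n hi] at this
    exact this
  · rw [Htil_invalid m n hi]; exact Commute.one_left _

lemma Commute.htilinv_left {i : ℤ} {z : WB m n} (h : Commute (Htil m n i) z) :
    Commute (Htilinv m n i) z := by
  by_cases hi : validIdx m n i
  · rw [Htilinv_eq m n hi]
    exact conj_sub_aux (Htil m n i) z (Htil m n i) (sc m n (qv - qv⁻¹)) h.eq
      (sc_commute m n _ z).eq
  · rw [Htilinv_invalid m n hi]; exact Commute.one_left _

lemma braid_t (i : ℤ) (hi : validIdx m n i) (hi1 : validIdx m n (i + 1)) :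
    Htil m n i * Htil m n (i+1) * Htil m n i
      = Htil m n (i+1) * Htil m n i * Htil m n (i+1) := by
  have := RingQuot.mkAlgHom_rel KK (WBrel.braid i hi hi1)
  simpa only [map_mul, mk_fH m n hi, mk_fH m n hi1] using this

lemma valid_neg_one (hm2 : 2 ≤ m) : validIdx m n (-1) := by
  right; constructor <;> omega

lemma valid_pos_one (hn2 : 2 ≤ n) : validIdx m n 1 := by
  left; constructor <;> omega

lemma eHe_neg (hm2 : 2 ≤ m) : EB m n * Htil m n (-1) * EB m n = sc m n tv * EB m n := by
  have := RingQuot.mkAlgHom_rel KK (WBrel.eHe (-1) (valid_neg_one m n hm2) (Or.inr rfl))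
  simpa only [map_mul, mk_fH m n (valid_neg_one m n hm2), AlgHom.commutes, EB] using this

lemma esq_t : EB m n * EB m n = sc m n ((tv - tv⁻¹)/(qv - qv⁻¹)) * EB m n := by
  have := RingQuot.mkAlgHom_rel KK (WBrel.esq (m := m) (n := n))
  simpa only [map_mul, AlgHom.commutes, EB] using this

lemma rel8_t (hm2 : 2 ≤ m) (hn2 : 2 ≤ n) :
    Htil m n (-1) * EB m n * Htilinv m n (-1) * Htil m n 1 * EB m n
      = Htil m n 1 * EB m n * Htilinv m n (-1) * Htil m n 1 * EB m n := by
  have := RingQuot.mkAlgHom_rel KK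
    (WBrel.rel8 (valid_pos_one m n hn2) (valid_neg_one m n hm2))
  simpa only [map_mul, mk_fH m n (valid_pos_one m n hn2), mk_fH m n (valid_neg_one m n hm2),
    mk_fHinv m n (valid_neg_one m n hm2), EB] using this

end RelsB

-- ## Part C: ℕ-indexed generators, products, commutation

section Prods
variable (m n : ℕ)

/-- `H_{-l}` -/
def Hn (l : ℕ) : WB m n := Htil m n (-(l : ℤ))
/-- `H_{-l}⁻¹` -/
def Hni (l : ℕ) : WB m n := Htilinv m n (-(l : ℤ))
/-- `H_l` -/
def Hp (l : ℕ) : WB m n := Htil m n (l : ℤ)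
/-- `H_l⁻¹` -/
def Hpi (l : ℕ) : WB m n := Htilinv m n (l : ℤ)

/-- descending product `H_{-s}⁻¹ H_{-(s+1)}⁻¹ ⋯` of `r` factors -/
def Dp (s r : ℕ) : WB m n := ((List.range r).map (fun l => Hni m n (s + l))).prod
/-- product `H_s H_{s+1} ⋯` of `r` factors -/
def Pp (s r : ℕ) : WB m n := ((List.range r).map (fun l => Hp m n (s + l))).prod

lemma valid_neg {l : ℕ} (h1 : 1 ≤ l) (h2 : l + 1 ≤ m) : validIdx m n (-(l : ℤ)) := by
  right; constructor <;> [skip; skip] <;> simp only [neg_neg] <;> omega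

lemma valid_pos {l : ℕ} (h1 : 1 ≤ l) (h2 : l + 1 ≤ n) : validIdx m n (l : ℤ) := by
  left; constructor <;> omega

lemma Hn_Hni {l : ℕ} (h1 : 1 ≤ l) (h2 : l + 1 ≤ m) : Hn m n l * Hni m n l = 1 :=
  quad_t m n (valid_neg m n h1 h2)
lemma Hni_Hn {l : ℕ} (h1 : 1 ≤ l) (h2 : l + 1 ≤ m) : Hni m n l * Hn m n l = 1 :=
  quad_t' m n (valid_neg m n h1 h2)
lemma Hp_Hpi {l : ℕ} (h1 : 1 ≤ l) (h2 : l + 1 ≤ n) : Hp m n l * Hpi m n l = 1 :=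
  quad_t m n (valid_pos m n h1 h2)
lemma Hpi_Hp {l : ℕ} (h1 : 1 ≤ l) (h2 : l + 1 ≤ n) : Hpi m n l * Hp m n l = 1 :=
  quad_t' m n (valid_pos m n h1 h2)

lemma Hn_split {l : ℕ} (h1 : 1 ≤ l) (h2 : l + 1 ≤ m) :
    Hn m n l = Hni m n l + sc m n (qv - qv⁻¹) :=
  Htil_eq_inv_add m n (valid_neg m n h1 h2)

-- commutation between generators
lemma commHnHn {a b : ℕ} (h : a + 2 ≤ b ∨ b + 2 ≤ a) : Commute (Hn m n a) (Hn m n b) :=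
  Hcomm m n _ _ (by rw [lt_abs]; omega)

lemma commHnHp {a b : ℕ} (ha : 1 ≤ a) (hb : 1 ≤ b) : Commute (Hn m n a) (Hp m n b) :=
  Hcomm m n _ _ (by rw [lt_abs]; omega)

lemma commHpHp {a b : ℕ} (h : a + 2 ≤ b ∨ b + 2 ≤ a) : Commute (Hp m n a) (Hp m n b) :=
  Hcomm m n _ _ (by rw [lt_abs]; omega)

lemma commHnE {a : ℕ} (h : 2 ≤ a) : Commute (Hn m n a) (EB m n) :=
  HcommE m n _ (by rw [le_abs]; omega)

lemma commHpE {a : ℕ} (h : 2 ≤ a) : Commute (Hp m n a) (EB m n) :=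
  HcommE m n _ (by rw [le_abs]; omega)

lemma Commute.htilinv_right {i : ℤ} {z : WB m n} (h : Commute z (Htil m n i)) :
    Commute z (Htilinv m n i) := ((Commute.htilinv_left m n h.symm)).symm

end Prods

-- ## Part D: product recursions, commutes with products, conjugation

section ProdsD
variable (m n : ℕ)

lemma Dp_zero (s : ℕ) : Dp m n s 0 = 1 := by simp [Dp]
lemma Pp_zero (s : ℕ) : Pp m n s 0 = 1 := by simp [Pp]

lemma Dp_back (s r : ℕ) : Dp m n s (r+1) = Dp m n s r * Hni m n (s+r) := by
  simp [Dp, List.range_succ]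
lemma Pp_back (s r : ℕ) : Pp m n s (r+1) = Pp m n s r * Hp m n (s+r) := by
  simp [Pp, List.range_succ]

lemma Dp_front (s r : ℕ) : Dp m n s (r+1) = Hni m n s * Dp m n (s+1) r := by
  induction r generalizing s with
  | zero => rw [Dp_back, Dp_zero, one_mul, Nat.add_zero, Dp_zero, mul_one]
  | succ r ih =>
      rw [Dp_back, ih, Dp_back, show s+1+r = s+(r+1) from by omega, mul_assoc]
lemma Pp_front (s r : ℕ) : Pp m n s (r+1) = Hp m n s * Pp m n (s+1) r := by
  induction r generalizing s with
  | zero => rw [Pp_back, Pp_zero, one_mul, Nat.add_zero, Pp_zero, mul_one]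
  | succ r ih =>
      rw [Pp_back, ih, Pp_back, show s+1+r = s+(r+1) from by omega, mul_assoc]

lemma ek_succ (k : ℕ) :
    ek m n (k+1) = EB m n * Dp m n 1 k * Pp m n 1 k * ek m n k := by
  have h1 : ((List.range k).map (fun j => Htilinv m n (-((j + 1 : ℕ) : ℤ))))
      = ((List.range k).map (fun l => Hni m n (1 + l))) := by
    apply List.map_congr_left
    intro j _
    simp [Hni, Nat.add_comm 1 j]
  have h2 : ((List.range k).map (fun j => Htil m n ((j + 1 : ℕ) : ℤ)))
      = ((List.range k).map (fun l => Hp m n (1 + l))) := by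
    apply List.map_congr_left
    intro j _
    simp [Hp, Nat.add_comm 1 j]
  show EB m n * _ * _ * ek m n k = _
  rw [h1, h2]; rfl

lemma ek_one : ek m n 1 = EB m n := by
  rw [ek_succ, Dp_zero, Pp_zero, mul_one, mul_one, show ek m n 0 = 1 from rfl, mul_one]

-- commutes with products
lemma commute_Dp (x : WB m n) (s r : ℕ) (h : ∀ l, l < r → Commute x (Hni m n (s+l))) :
    Commute x (Dp m n s r) := by
  apply Commute.list_prod_right
  intro y hy
  simp only [List.mem_map, List.mem_range] at hy
  obtain ⟨l, hl, rfl⟩ := hy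
  exact h l hl

lemma commute_Pp (x : WB m n) (s r : ℕ) (h : ∀ l, l < r → Commute x (Hp m n (s+l))) :
    Commute x (Pp m n s r) := by
  apply Commute.list_prod_right
  intro y hy
  simp only [List.mem_map, List.mem_range] at hy
  obtain ⟨l, hl, rfl⟩ := hy
  exact h l hl

lemma commHnDp_low {a s : ℕ} (r : ℕ) (h : a + 2 ≤ s) : Commute (Hn m n a) (Dp m n s r) :=
  commute_Dp m n _ s r fun l _ => Commute.htilinv_right m n (commHnHn m n (Or.inl (by omega)))

lemma commHnDp_high {a s : ℕ} (r : ℕ) (h : s + r + 1 ≤ a) : Commute (Hn m n a) (Dp m n s r) :=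
  commute_Dp m n _ s r fun l hl => Commute.htilinv_right m n (commHnHn m n (Or.inr (by omega)))

lemma commHpDp {a s : ℕ} (r : ℕ) (ha : 1 ≤ a) (hs : 1 ≤ s) :
    Commute (Hp m n a) (Dp m n s r) :=
  commute_Dp m n _ s r fun l _ =>
    Commute.htilinv_right m n ((commHnHp m n (by omega) ha).symm)

lemma commEDp {s : ℕ} (r : ℕ) (hs : 2 ≤ s) : Commute (EB m n) (Dp m n s r) :=
  commute_Dp m n _ s r fun l _ =>
    Commute.htilinv_right m n ((commHnE m n (by omega)).symm)

lemma commHnPp {a s : ℕ} (r : ℕ) (ha : 1 ≤ a) (hs : 1 ≤ s) :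
    Commute (Hn m n a) (Pp m n s r) :=
  commute_Pp m n _ s r fun l _ => commHnHp m n ha (by omega)

lemma commHniPp {a s : ℕ} (r : ℕ) (ha : 1 ≤ a) (hs : 1 ≤ s) :
    Commute (Hni m n a) (Pp m n s r) :=
  Commute.htilinv_left m n (commHnPp m n r ha hs)

lemma commHniDp_low {a s : ℕ} (r : ℕ) (h : a + 2 ≤ s) : Commute (Hni m n a) (Dp m n s r) :=
  Commute.htilinv_left m n (commHnDp_low m n r h)

lemma commHpPp_low {a s : ℕ} (r : ℕ) (h : a + 2 ≤ s) : Commute (Hp m n a) (Pp m n s r) :=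
  commute_Pp m n _ s r fun l _ => commHpHp m n (Or.inl (by omega))

lemma commHpPp_high {a s : ℕ} (r : ℕ) (h : s + r + 1 ≤ a) : Commute (Hp m n a) (Pp m n s r) :=
  commute_Pp m n _ s r fun l hl => commHpHp m n (Or.inr (by omega))

lemma commEPp {s : ℕ} (r : ℕ) (hs : 2 ≤ s) : Commute (EB m n) (Pp m n s r) :=
  commute_Pp m n _ s r fun l _ => (commHpE m n (by omega)).symm

-- braid relations, ℕ-indexed
lemma braid_neg (p : ℕ) (h : p + 3 ≤ m) :
    Hn m n (p+2) * Hn m n (p+1) * Hn m n (p+2)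
      = Hn m n (p+1) * Hn m n (p+2) * Hn m n (p+1) := by
  have hv1 : validIdx m n (-((p+2 : ℕ) : ℤ)) := valid_neg m n (by omega) (by omega)
  have hv2 : validIdx m n ((-((p+2 : ℕ) : ℤ)) + 1) := by
    have : (-((p+2 : ℕ) : ℤ)) + 1 = -((p+1 : ℕ) : ℤ) := by push_cast; ring
    rw [this]; exact valid_neg m n (by omega) (by omega)
  have := braid_t m n (-((p+2 : ℕ) : ℤ)) hv1 hv2
  have hcast : (-((p+2 : ℕ) : ℤ)) + 1 = -((p+1 : ℕ) : ℤ) := by push_cast; ring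
  rw [hcast] at this
  exact this

lemma braid_pos (p : ℕ) (h : p + 3 ≤ n) :
    Hp m n (p+2) * Hp m n (p+1) * Hp m n (p+2)
      = Hp m n (p+1) * Hp m n (p+2) * Hp m n (p+1) := by
  have hv1 : validIdx m n ((p+1 : ℕ) : ℤ) := valid_pos m n (by omega) (by omega)
  have hv2 : validIdx m n (((p+1 : ℕ) : ℤ) + 1) := by
    have : ((p+1 : ℕ) : ℤ) + 1 = ((p+2 : ℕ) : ℤ) := by push_cast; ring
    rw [this]; exact valid_pos m n (by omega) (by omega)
  have := braid_t m n ((p+1 : ℕ) : ℤ) hv1 hv2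
  have hcast : ((p+1 : ℕ) : ℤ) + 1 = ((p+2 : ℕ) : ℤ) := by push_cast; ring
  rw [hcast] at this
  exact this.symm

lemma bc1 (p : ℕ) (h : p + 3 ≤ m) :
    Hn m n (p+2) * Hni m n (p+1) * Hni m n (p+2)
      = Hni m n (p+1) * (Hni m n (p+2) * Hn m n (p+1)) :=
  braid_conj₁ (Hni_Hn m n (by omega) (by omega))
    (Hn_Hni m n (by omega) (by omega))
    (Hni_Hn m n (by omega) (by omega))
    (Hn_Hni m n (by omega) (by omega))
    (braid_neg m n p h)

lemma bc2 (p : ℕ) (h : p + 3 ≤ m) :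
    Hni m n (p+1) * Hn m n (p+2) * Hn m n (p+1)
      = Hn m n (p+2) * (Hn m n (p+1) * Hni m n (p+2)) :=
  braid_conj₂ (Hni_Hn m n (by omega) (by omega))
    (Hn_Hni m n (by omega) (by omega))
    (braid_neg m n p h)

end ProdsD

-- ## Part E: reassociation helpers, conjugation through products

section GenericE
variable {M : Type*} [Monoid M] {a b c d z : M}

lemma reassoc₂ (x : M) (h : a * b = z) : x * a * b = x * z := by
  rw [mul_assoc, h]
lemma reassoc₃ (x : M) (h : a * b * c = z) : x * a * b * c = x * z := by
  calc x * a * b * c = x * (a * b * c) := by simp only [mul_assoc]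
    _ = x * z := by rw [h]
lemma reassoc₄ (x : M) (h : a * b * c * d = z) : x * a * b * c * d = x * z := by
  calc x * a * b * c * d = x * (a * b * c * d) := by simp only [mul_assoc]
    _ = x * z := by rw [h]

end GenericE

section ConjE
variable (m n : ℕ)

lemma conjA (p : ℕ) : ∀ k, p + 2 ≤ k → p + 3 ≤ m →
    Hn m n (p+2) * Dp m n 1 k = Dp m n 1 k * Hn m n (p+1) := by
  intro k
  induction k with
  | zero => intro h _; omega
  | succ k ih =>
    intro hk hm
    by_cases hc : p + 2 ≤ k
    · have hcm : Commute (Hn m n (p+1)) (Hni m n (1+k)) :=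
        Commute.htilinv_right m n (commHnHn m n (Or.inl (by omega)))
      rw [Dp_back, ← mul_assoc, ih hc hm, mul_assoc, hcm.eq, ← mul_assoc]
    · have hk1 : k = p + 1 := by omega
      subst hk1
      rw [Dp_back, Dp_back,
        show Hni m n (1+p) = Hni m n (p+1) from by rw [Nat.add_comm],
        show Hni m n (1+(p+1)) = Hni m n (p+2) from by rw [Nat.add_comm]]
      have h1 : Hn m n (p+2) * Dp m n 1 p = Dp m n 1 p * Hn m n (p+2) :=
        (commHnDp_high m n p (by omega)).eq
      have h2 : Hn m n (p+2) * Hni m n (p+1) * Hni m n (p+2)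
          = Hni m n (p+1) * Hni m n (p+2) * Hn m n (p+1) := by
        rw [bc1 m n p hm, ← mul_assoc]
      simp only [← mul_assoc]
      rw [h1, reassoc₃ _ h2]
      simp only [← mul_assoc]

lemma conjB (p : ℕ) : ∀ k, p + 2 ≤ k → p + 3 ≤ n →
    Hp m n (p+2) * Pp m n 1 k = Pp m n 1 k * Hp m n (p+1) := by
  intro k
  induction k with
  | zero => intro h _; omega
  | succ k ih =>
    intro hk hn
    by_cases hc : p + 2 ≤ k
    · have hcm : Commute (Hp m n (p+1)) (Hp m n (1+k)) :=
        commHpHp m n (Or.inl (by omega))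
      rw [Pp_back, ← mul_assoc, ih hc hn, mul_assoc, hcm.eq, ← mul_assoc]
    · have hk1 : k = p + 1 := by omega
      subst hk1
      rw [Pp_back, Pp_back,
        show Hp m n (1+p) = Hp m n (p+1) from by rw [Nat.add_comm],
        show Hp m n (1+(p+1)) = Hp m n (p+2) from by rw [Nat.add_comm]]
      have h1 : Hp m n (p+2) * Pp m n 1 p = Pp m n 1 p * Hp m n (p+2) :=
        (commHpPp_high m n p (by omega)).eq
      have h2 : Hp m n (p+2) * Hp m n (p+1) * Hp m n (p+2)
          = Hp m n (p+1) * Hp m n (p+2) * Hp m n (p+1) := braid_pos m n p hn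
      simp only [← mul_assoc]
      rw [h1, reassoc₃ _ h2]
      simp only [← mul_assoc]

end ConjE

-- ## Part F: commutation with `e_k`, the `H_{-j} e_k = H_j e_k` lemma

section PartF
variable (m n : ℕ)

/-- `H_{-l}` commutes with `e_k` for `l ≥ k+1`, `l ≥ 2`. -/
lemma comm_ek (k : ℕ) : ∀ l, k + 1 ≤ l → Commute (Hn m n l) (ek m n k) := by
  induction k with
  | zero => intro l _; exact Commute.one_right _
  | succ k ih =>
    intro l hl
    have h2 : 2 ≤ l := by omega
    rw [ek_succ]
    exact (((commHnE m n h2).mul_right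
      (commHnDp_high m n k (by omega))).mul_right
      (commHnPp m n k (by omega) (by omega))).mul_right (ih l (by omega))

/-- `e_{k+2} = (e H_{-1}⁻¹ H_1 e) ⬝ (shifted products)`. -/
lemma ek_two_front (l : ℕ) :
    ek m n (l+2) = EB m n * Hni m n 1 * Hp m n 1 * EB m n *
      (Dp m n 2 l * Pp m n 2 l * (Dp m n 1 l * Pp m n 1 l * ek m n l)) := by
  have hDpE : Dp m n 2 l * EB m n = EB m n * Dp m n 2 l := (commEDp m n l (by omega)).eq.symm
  have hPpE : Pp m n 2 l * EB m n = EB m n * Pp m n 2 l := (commEPp m n l (by omega)).eq.symm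
  have hDpHp : Dp m n 2 l * Hp m n 1 = Hp m n 1 * Dp m n 2 l :=
    (commHpDp m n l (by omega) (by omega)).eq.symm
  rw [ek_succ, ek_succ, Dp_front, Pp_front, show (1:ℕ)+1 = 2 from rfl]
  simp only [← mul_assoc]
  rw [reassoc₂ _ hDpHp]
  simp only [← mul_assoc]
  rw [reassoc₂ _ hPpE]
  simp only [← mul_assoc]
  rw [reassoc₂ _ hDpE]
  simp only [← mul_assoc]

/-- `H_{-j} e_k = H_j e_k` for `1 ≤ j ≤ k-1`. -/
lemma K2lem (j : ℕ) : ∀ k, 1 ≤ j → j + 1 ≤ k → k ≤ m → k ≤ n →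
    Hn m n j * ek m n k = Hp m n j * ek m n k := by
  induction j with
  | zero => intro k h; omega
  | succ p ih =>
    intro k _ hjk hkm hkn
    match p, ih with
    | 0, _ =>
      -- base case j = 1, k ≥ 2
      obtain ⟨l, rfl⟩ : ∃ l, k = l + 2 := ⟨k - 2, by omega⟩
      have hm2 : 2 ≤ m := by omega
      have hn2 : 2 ≤ n := by omega
      have hb : Hn m n 1 * (EB m n * Hni m n 1 * Hp m n 1 * EB m n)
          = Hp m n 1 * (EB m n * Hni m n 1 * Hp m n 1 * EB m n) := by
        have := rel8_t m n hm2 hn2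
        have e1 : Hn m n 1 = Htil m n (-1) := by norm_num [Hn]
        have e2 : Hp m n 1 = Htil m n (1 : ℤ) := by norm_num [Hp]
        have e3 : Hni m n 1 = Htilinv m n (-1) := by norm_num [Hni]
        rw [e1, e2, e3]
        simp only [← mul_assoc]
        exact this
      rw [ek_two_front, ← mul_assoc, ← mul_assoc, hb]
      simp only [Nat.zero_add, ← mul_assoc]
    | p + 1, ih =>
      -- step case j = p+2, k = l+1 with l ≥ p+2
      obtain ⟨l, rfl⟩ : ∃ l, k = l + 1 := ⟨k - 1, by omega⟩
      have hl : p + 2 ≤ l := by omega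
      rw [ek_succ]
      have c1 : Hn m n (p+2) * EB m n = EB m n * Hn m n (p+2) :=
        (commHnE m n (by omega)).eq
      have c2 : Hp m n (p+2) * EB m n = EB m n * Hp m n (p+2) :=
        (commHpE m n (by omega)).eq
      have c3 : Hn m n (p+1) * Pp m n 1 l = Pp m n 1 l * Hn m n (p+1) :=
        (commHnPp m n l (by omega) (by omega)).eq
      have c4 : Hp m n (p+2) * Dp m n 1 l = Dp m n 1 l * Hp m n (p+2) :=
        (commHpDp m n l (by omega) (by omega)).eq
      calc Hn m n (p+2) * (EB m n * Dp m n 1 l * Pp m n 1 l * ek m n l)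
          = EB m n * (Hn m n (p+2) * Dp m n 1 l) * Pp m n 1 l * ek m n l := by
            simp only [← mul_assoc]; rw [c1]
        _ = EB m n * Dp m n 1 l * (Hn m n (p+1) * Pp m n 1 l) * ek m n l := by
            rw [conjA m n p l hl (by omega)]; simp only [← mul_assoc]
        _ = EB m n * Dp m n 1 l * Pp m n 1 l * (Hn m n (p+1) * ek m n l) := by
            rw [c3]; simp only [← mul_assoc]
        _ = EB m n * Dp m n 1 l * Pp m n 1 l * (Hp m n (p+1) * ek m n l) := by
            rw [ih l (by omega) (by omega) (by omega) (by omega)]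
        _ = EB m n * Dp m n 1 l * (Hp m n (p+2) * Pp m n 1 l) * ek m n l := by
            rw [conjB m n p l hl (by omega)]; simp only [← mul_assoc]
        _ = EB m n * (Hp m n (p+2) * Dp m n 1 l) * Pp m n 1 l * ek m n l := by
            rw [c4]; simp only [← mul_assoc]
        _ = Hp m n (p+2) * (EB m n * Dp m n 1 l * Pp m n 1 l * ek m n l) := by
            simp only [← mul_assoc]; rw [← c2]

end PartF

-- ## Part G: `e e_k`, `e A_l B_l e_k`, `e_i e_k`

section GenericG
variable {M : Type*} [Monoid M] {a b c d e f z : M}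
lemma reassoc₅ (x : M) (h : a * b * c * d * e = z) : x * a * b * c * d * e = x * z := by
  calc x * a * b * c * d * e = x * (a * b * c * d * e) := by simp only [mul_assoc]
    _ = x * z := by rw [h]
lemma reassoc₆ (x : M) (h : a * b * c * d * e * f = z) : x * a * b * c * d * e * f = x * z := by
  calc x * a * b * c * d * e * f = x * (a * b * c * d * e * f) := by simp only [mul_assoc]
    _ = x * z := by rw [h]
end GenericG

section PartG
variable (m n : ℕ)

/-- the scalar `δ = (t - t⁻¹)/(q - q⁻¹)` -/
noncomputable abbrev dl : KK := (tv - tv⁻¹) / (qv - qv⁻¹)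

lemma sc_pull (x : KK) (a b : WB m n) : a * (sc m n x * b) = sc m n x * (a * b) := by
  rw [← mul_assoc, ← (sc_commute m n x a).eq, mul_assoc]

lemma E_ek (k : ℕ) (hk : 1 ≤ k) : EB m n * ek m n k = sc m n dl * ek m n k := by
  obtain ⟨l, rfl⟩ : ∃ l, k = l + 1 := ⟨k - 1, by omega⟩
  rw [ek_succ]
  simp only [← mul_assoc]
  rw [esq_t]

lemma K4lem (l : ℕ) : ∀ k, l + 1 ≤ k → k ≤ m → k ≤ n →
    EB m n * Dp m n 1 l * Pp m n 1 l * ek m n k = sc m n dl * ek m n k := by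
  induction l with
  | zero =>
    intro k hk hm hn
    rw [Dp_zero, Pp_zero, mul_one, mul_one]
    exact E_ek m n k hk
  | succ p ih =>
    intro k hk hm hn
    rw [Dp_back, Pp_back,
      show Hni m n (1+p) = Hni m n (p+1) from by rw [Nat.add_comm],
      show Hp m n (1+p) = Hp m n (p+1) from by rw [Nat.add_comm]]
    have hK2 : Hp m n (p+1) * ek m n k = Hn m n (p+1) * ek m n k :=
      (K2lem m n (p+1) k (by omega) (by omega) hm hn).symm
    have hswap : Pp m n 1 p * Hn m n (p+1) = Hn m n (p+1) * Pp m n 1 p :=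
      (commHnPp m n p (by omega) (by omega)).eq.symm
    have hcan : Hni m n (p+1) * Hn m n (p+1) = 1 := Hni_Hn m n (by omega) (by omega)
    simp only [← mul_assoc]
    rw [reassoc₂ _ hK2]
    simp only [← mul_assoc]
    rw [reassoc₂ _ hswap]
    simp only [← mul_assoc]
    rw [reassoc₂ _ hcan, mul_one]
    exact ih k (by omega) hm hn

lemma eik (i : ℕ) : ∀ k, i ≤ k → k ≤ m → k ≤ n →
    ek m n i * ek m n k = sc m n (dl ^ i) * ek m n k := by
  induction i with
  | zero =>
    intro k _ _ _
    rw [show ek m n 0 = 1 from rfl, one_mul, pow_zero,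
      show sc m n (1:KK) = 1 from map_one _, one_mul]
  | succ p ih =>
    intro k hk hm hn
    rw [ek_succ]
    calc EB m n * Dp m n 1 p * Pp m n 1 p * ek m n p * ek m n k
        = EB m n * Dp m n 1 p * Pp m n 1 p * (ek m n p * ek m n k) := by
          simp only [mul_assoc]
      _ = EB m n * Dp m n 1 p * Pp m n 1 p * (sc m n (dl ^ p) * ek m n k) := by
          rw [ih k (by omega) hm hn]
      _ = sc m n (dl ^ p) * (EB m n * Dp m n 1 p * Pp m n 1 p * ek m n k) := by
          rw [mul_assoc, mul_assoc, sc_pull, sc_pull, sc_pull]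
          simp only [mul_assoc]
      _ = sc m n (dl ^ p) * (sc m n dl * ek m n k) := by
          rw [K4lem m n p k (by omega) hm hn]
      _ = sc m n (dl ^ (p+1)) * ek m n k := by
          rw [← mul_assoc, ← map_mul, pow_succ, mul_comm (dl ^ p) dl]

end PartG

-- ## Part H: the master lemma Ψ

section PartH
variable (m n : ℕ)

lemma Psi : ∀ j r k, j + 1 ≤ k → k ≤ m → k ≤ n → j + r + 2 ≤ m →
    EB m n * Dp m n 1 j * Pp m n 1 j * Hn m n (j+1) * (Dp m n (j+2) r * ek m n k)
      = sc m n tv * (Dp m n (j+2) r * ek m n k) := by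
  intro j
  induction j with
  | zero =>
    intro r k hk hkm hkn hmr
    rw [show (0:ℕ)+1 = 1 from by omega, show (0:ℕ)+2 = 2 from by omega,
      Dp_zero, Pp_zero, mul_one, mul_one]
    obtain ⟨l, rfl⟩ : ∃ l, k = l + 1 := ⟨k - 1, by omega⟩
    rw [ek_succ]
    have hEHE : EB m n * Hn m n 1 * EB m n = sc m n tv * EB m n := by
      have e1 : Hn m n 1 = Htil m n (-1) := by norm_num [Hn]
      rw [e1]; exact eHe_neg m n (by omega)
    have hDE : Dp m n 2 r * EB m n = EB m n * Dp m n 2 r := (commEDp m n r le_rfl).eq.symm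
    try simp only [← mul_assoc]
    rw [reassoc₂ _ hDE]
    try simp only [← mul_assoc]
    rw [hEHE]
    try simp only [← mul_assoc]
    rw [reassoc₂ _ hDE.symm]
    try simp only [← mul_assoc]
  | succ p ih =>
    intro r k hk hkm hkn hmr
    have hk' : p + 2 ≤ k := by omega
    have hm3 : p + 3 ≤ m := by omega
    rw [show p+1+1 = p+2 from by omega, show p+1+2 = p+3 from by omega,
      Dp_back m n 1 p, Pp_back m n 1 p,
      show Hni m n (1+p) = Hni m n (p+1) from by rw [Nat.add_comm],
      show Hp m n (1+p) = Hp m n (p+1) from by rw [Nat.add_comm]]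
    have hswap1 : Hp m n (p+1) * Hn m n (p+2) = Hn m n (p+2) * Hp m n (p+1) :=
      (commHnHp m n (a := p+2) (b := p+1) (by omega) (by omega)).eq.symm
    have hswap2 : Hp m n (p+1) * Dp m n (p+3) r = Dp m n (p+3) r * Hp m n (p+1) :=
      (commHpDp m n (a := p+1) (s := p+3) r (by omega) (by omega)).eq
    have hK2 : Hp m n (p+1) * ek m n k = Hn m n (p+1) * ek m n k :=
      (K2lem m n (p+1) k (by omega) (by omega) hkm hkn).symm
    have hswap3 : Dp m n (p+3) r * Hn m n (p+1) = Hn m n (p+1) * Dp m n (p+3) r :=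
      (commHnDp_low m n (a := p+1) (s := p+3) r (by omega)).eq.symm
    have hswap4 : Hni m n (p+1) * Pp m n 1 p = Pp m n 1 p * Hni m n (p+1) :=
      (commHniPp m n (a := p+1) (s := 1) p (by omega) (by omega)).eq
    have hbc2 : Hni m n (p+1) * Hn m n (p+2) * Hn m n (p+1)
        = Hn m n (p+2) * Hn m n (p+1) * Hni m n (p+2) :=
      (bc2 m n p hm3).trans (mul_assoc _ _ _).symm
    have hswap5 : Pp m n 1 p * Hn m n (p+2) = Hn m n (p+2) * Pp m n 1 p :=
      (commHnPp m n (a := p+2) (s := 1) p (by omega) (by omega)).eq.symm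
    have hswap6 : Dp m n 1 p * Hn m n (p+2) = Hn m n (p+2) * Dp m n 1 p :=
      (commHnDp_high m n (a := p+2) (s := 1) p (by omega)).eq.symm
    have hswap7 : EB m n * Hn m n (p+2) = Hn m n (p+2) * EB m n :=
      (commHnE m n (by omega)).eq.symm
    have hfront : Hni m n (p+2) * Dp m n (p+3) r = Dp m n (p+2) (r+1) := by
      have := Dp_front m n (p+2) r
      rw [show p+2+1 = p+3 from by omega] at this
      exact this.symm
    have hIH := ih (r+1) k (by omega) hkm hkn (by omega)
    rw [show p+1 = p+1 from rfl, show p+2 = p+2 from rfl] at hIH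
    simp only [← mul_assoc] at hIH
    have hsc : Hn m n (p+2) * sc m n tv = sc m n tv * Hn m n (p+2) :=
      (sc_commute m n tv _).eq.symm
    have hcan : Hn m n (p+2) * Hni m n (p+2) = 1 := Hn_Hni m n (by omega) (by omega)
    try simp only [← mul_assoc]
    rw [reassoc₂ _ hswap1]
    try simp only [← mul_assoc]
    rw [reassoc₂ _ hswap2]
    try simp only [← mul_assoc]
    rw [reassoc₂ _ hK2]
    try simp only [← mul_assoc]
    rw [reassoc₂ _ hswap3]
    try simp only [← mul_assoc]
    rw [reassoc₂ _ hswap4]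
    try simp only [← mul_assoc]
    rw [reassoc₃ _ hbc2]
    try simp only [← mul_assoc]
    rw [reassoc₂ _ hswap5]
    try simp only [← mul_assoc]
    rw [reassoc₂ _ hswap6]
    try simp only [← mul_assoc]
    rw [hswap7]
    try simp only [← mul_assoc]
    rw [reassoc₂ _ hfront]
    try simp only [← mul_assoc]
    rw [reassoc₆ _ hIH]
    try simp only [← mul_assoc]
    rw [hsc]
    rw [← hfront]
    try simp only [← mul_assoc]
    rw [reassoc₂ _ hcan, mul_one]

end PartH

-- ## Part I: the `M` lemma and the main theorem

section GenericI
variable {M : Type*} [Monoid M] {a b c d e f g z : M}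
lemma reassoc₇ (x : M) (h : a * b * c * d * e * f * g = z) :
    x * a * b * c * d * e * f * g = x * z := by
  calc x * a * b * c * d * e * f * g = x * (a * b * c * d * e * f * g) := by
        simp only [mul_assoc]
    _ = x * z := by rw [h]
end GenericI

section PartI
variable (m n : ℕ)

lemma Mlem (j k : ℕ) (hk : j + 2 ≤ k) (hkm : k ≤ m) (hkn : k ≤ n) (hjm : j + 3 ≤ m) :
    EB m n * Dp m n 1 j * Pp m n 1 j * Hn m n (j+1) * Hn m n (j+2) * Hn m n (j+1) * ek m n k
      = sc m n tv * ((1 + sc m n (qv - qv⁻¹) * Hn m n (j+2)) * ek m n k) := by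
  have hK2a : Hn m n (j+1) * ek m n k = Hp m n (j+1) * ek m n k :=
    K2lem m n (j+1) k (by omega) (by omega) hkm hkn
  have hswapA : Hn m n (j+2) * Hp m n (j+1) = Hp m n (j+1) * Hn m n (j+2) :=
    (commHnHp m n (a := j+2) (b := j+1) (by omega) (by omega)).eq
  rw [reassoc₂ _ hK2a]
  try simp only [← mul_assoc]
  rw [reassoc₂ _ hswapA]
  try simp only [← mul_assoc]
  rw [Hn_split m n (l := j+1) (by omega) (by omega)]
  simp only [add_mul, mul_add, one_mul, mul_one, ← mul_assoc]
  congr 1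
  · -- `Hni` term: becomes Ψ(j+1, 0, k)
    have hswapB : Pp m n 1 j * Hni m n (j+1) = Hni m n (j+1) * Pp m n 1 j :=
      (commHniPp m n (a := j+1) (s := 1) j (by omega) (by omega)).eq.symm
    have hD : Dp m n 1 j * Hni m n (j+1) = Dp m n 1 (j+1) := by
      rw [Dp_back, show 1+j = j+1 from by omega]
    have hP : Pp m n 1 j * Hp m n (j+1) = Pp m n 1 (j+1) := by
      rw [Pp_back, show 1+j = j+1 from by omega]
    have hPsi1 := Psi m n (j+1) 0 k (by omega) hkm hkn (by omega)
    rw [Dp_zero, one_mul, show j+1+1 = j+2 from by omega] at hPsi1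
    rw [reassoc₂ _ hswapB]
    try simp only [← mul_assoc]
    rw [reassoc₂ _ hD, reassoc₂ _ hP]
    try simp only [← mul_assoc] at hPsi1 ⊢
    exact hPsi1
  · -- `sc c` term
    have hscmv : EB m n * Dp m n 1 j * Pp m n 1 j * sc m n (qv - qv⁻¹)
        = sc m n (qv - qv⁻¹) * (EB m n * Dp m n 1 j * Pp m n 1 j) :=
      (sc_commute m n (qv - qv⁻¹) _).eq.symm
    have hswapC : Hp m n (j+1) * Hn m n (j+2) = Hn m n (j+2) * Hp m n (j+1) :=
      (commHnHp m n (a := j+2) (b := j+1) (by omega) (by omega)).eq.symm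
    have hK2b : Hp m n (j+1) * ek m n k = Hn m n (j+1) * ek m n k :=
      (K2lem m n (j+1) k (by omega) (by omega) hkm hkn).symm
    have hswap5 : Pp m n 1 j * Hn m n (j+2) = Hn m n (j+2) * Pp m n 1 j :=
      (commHnPp m n (a := j+2) (s := 1) j (by omega) (by omega)).eq.symm
    have hswap6 : Dp m n 1 j * Hn m n (j+2) = Hn m n (j+2) * Dp m n 1 j :=
      (commHnDp_high m n (a := j+2) (s := 1) j (by omega)).eq.symm
    have hswap7 : EB m n * Hn m n (j+2) = Hn m n (j+2) * EB m n :=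
      (commHnE m n (by omega)).eq.symm
    have hPsi0 := Psi m n j 0 k (by omega) hkm hkn (by omega)
    rw [Dp_zero, one_mul] at hPsi0
    try simp only [← mul_assoc] at hPsi0
    have hsc2 : Hn m n (j+2) * sc m n tv = sc m n tv * Hn m n (j+2) :=
      (sc_commute m n tv _).eq.symm
    have hsc3 : sc m n (qv - qv⁻¹) * sc m n tv = sc m n tv * sc m n (qv - qv⁻¹) := by
      rw [← map_mul, ← map_mul, mul_comm]
    rw [hscmv]
    try simp only [← mul_assoc]
    rw [reassoc₂ _ hswapC]
    try simp only [← mul_assoc]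
    rw [reassoc₂ _ hK2b]
    try simp only [← mul_assoc]
    rw [reassoc₂ _ hswap5]
    try simp only [← mul_assoc]
    rw [reassoc₂ _ hswap6]
    try simp only [← mul_assoc]
    rw [reassoc₂ _ hswap7]
    try simp only [← mul_assoc]
    rw [reassoc₅ _ hPsi0]
    try simp only [← mul_assoc]
    rw [reassoc₂ _ hsc2, ← mul_assoc, hsc3]
    try simp only [← mul_assoc]

end PartI


/-- For `1 ≤ i`, `i + 1 ≤ k ≤ min{m,n}` and `i + 1 ≤ m - 1`, one has
`e_i H_{-i} H_{-(i+1)} H_{-i} e_k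
  = t ((t - t⁻¹)/(q - q⁻¹))^{i-1} (1 + (q - q⁻¹) H_{-(i+1)}) e_k`. -/
theorem ei_HHH_ek (m n : ℕ) (hm : 1 ≤ m) (hn : 1 ≤ n) (i k : ℕ)
    (hi : 1 ≤ i) (hik : i + 1 ≤ k) (hk : k ≤ min m n)
    (him : (i : ℤ) + 1 ≤ (m : ℤ) - 1) :
    ek m n i * Htil m n (-(i : ℤ)) * Htil m n (-((i : ℤ) + 1)) * Htil m n (-(i : ℤ)) *
        ek m n k =
      algebraMap KK (WB m n) (tv * ((tv - tv⁻¹) / (qv - qv⁻¹)) ^ (i - 1)) *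
        ((1 + algebraMap KK (WB m n) (qv - qv⁻¹) * Htil m n (-((i : ℤ) + 1))) *
          ek m n k) := by

  obtain ⟨p, rfl⟩ : ∃ p, i = p + 1 := ⟨i - 1, by omega⟩
  have hkm : k ≤ m := le_trans hk (min_le_left _ _)
  have hkn : k ≤ n := le_trans hk (min_le_right _ _)
  have hm3 : p + 3 ≤ m := by omega
  have hb1 : Htil m n (-((p+1 : ℕ) : ℤ)) = Hn m n (p+1) := rfl
  have hb2 : Htil m n (-(((p+1 : ℕ) : ℤ) + 1)) = Hn m n (p+2) := by
    have hcast : (-(((p+1 : ℕ) : ℤ) + 1)) = (-((p+2 : ℕ) : ℤ)) := by push_cast; ring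
    rw [hcast]; rfl
  rw [hb1, hb2, Nat.add_sub_cancel, ek_succ m n p]
  have hc1 : ek m n p * Hn m n (p+1) = Hn m n (p+1) * ek m n p :=
    (comm_ek m n p (p+1) (by omega)).eq.symm
  have hc2 : ek m n p * Hn m n (p+2) = Hn m n (p+2) * ek m n p :=
    (comm_ek m n p (p+2) (by omega)).eq.symm
  have heik : ek m n p * ek m n k = sc m n (dl ^ p) * ek m n k :=
    eik m n p k (by omega) hkm hkn
  have hblk : EB m n * Dp m n 1 p * Pp m n 1 p * Hn m n (p+1) * Hn m n (p+2) * Hn m n (p+1)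
        * sc m n (dl ^ p)
      = sc m n (dl ^ p) *
        (EB m n * Dp m n 1 p * Pp m n 1 p * Hn m n (p+1) * Hn m n (p+2) * Hn m n (p+1)) :=
    (sc_commute m n (dl ^ p) _).eq.symm
  have hM := Mlem m n p k (by omega) hkm hkn hm3
  simp only [← mul_assoc]
  rw [reassoc₂ _ hc1]
  try simp only [← mul_assoc]
  rw [reassoc₂ _ hc2]
  try simp only [← mul_assoc]
  rw [reassoc₂ _ hc1]
  try simp only [← mul_assoc]
  rw [reassoc₂ _ heik]
  try simp only [← mul_assoc]
  rw [hblk]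
  try simp only [← mul_assoc]
  rw [reassoc₇ _ hM]
  rw [← mul_assoc, ← map_mul, mul_comm (dl ^ p) tv]
  simp only [mul_assoc]


end
end
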